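/- arXiv:1202.1004 — 9 statements merged into one kernel-verified Lean document; each statement's English description precedes it below -/
import Mathlib

section
/- For any category X, the pointwise complement is a monoidal action of presheaves on copresheaves: for every copresheaf M : X ⥤ Type there is a natural isomorphism I ⧀ M ≅ M, where I is the terminal presheaf (constant at a one-element set), and for all presheaves A, B : Xᵒᵖ ⥤ Type there is a natural isomorphism (A × B) ⧀ M ≅ A ⧀ (B ⧀ M), where A × B is the pointwise (categorical) product of presheaves. -/
open CategoryTheory Opposite

universe u

/-- The pointwise complement `A ⧀ M` of a presheaf `A` in a copresheaf `M`:
`(A ⧀ M)(x) = (A(x) → M(x))`, with `(A ⧀ M)(λ)` sending `φ` to `M(λ) ∘ φ ∘ A(λ)`. -/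
@[simps]
def compl {X : Type u} [Category.{u} X] (A : Xᵒᵖ ⥤ Type u) (M : X ⥤ Type u) :
    X ⥤ Type u where
  obj x := A.obj (op x) → M.obj x
  map {x y} f := TypeCat.ofHom fun φ => fun a => M.map f (φ (A.map f.op a))
  map_id := by intro x; ext φ a; simp
  map_comp := by intros; ext φ a; simp

/-- The pointwise (categorical) product of two presheaves. -/
@[simps]
def prodP {X : Type u} [Category.{u} X] (A B : Xᵒᵖ ⥤ Type u) : Xᵒᵖ ⥤ Type u where
  obj x := A.obj x × B.obj x
  map f := TypeCat.ofHom fun p => (A.map f p.1, B.map f p.2)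
  map_id := by intro x; ext p <;> simp
  map_comp := by intros; ext p <;> simp

/-- The terminal presheaf, constant at a one-element set. -/
def terminalP (X : Type u) [Category.{u} X] : Xᵒᵖ ⥤ Type u :=
  (Functor.const Xᵒᵖ).obj PUnit

/-- the pointwise complement is a monoidal action of presheaves on
copresheaves: `I ⧀ M ≅ M` naturally, and `(A × B) ⧀ M ≅ A ⧀ (B ⧀ M)` naturally. -/
theorem compl_is_monoidal_action (X : Type u) [Category.{u} X] :
    (∀ M : X ⥤ Type u, Nonempty (compl (terminalP X) M ≅ M)) ∧
    (∀ (A B : Xᵒᵖ ⥤ Type u) (M : X ⥤ Type u),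
      Nonempty (compl (prodP A B) M ≅ compl A (compl B M))) := by
  constructor
  · intro M
    exact ⟨NatIso.ofComponents
      (fun x => { hom := TypeCat.ofHom fun φ => φ PUnit.unit
                  inv := TypeCat.ofHom fun m _ => m
                  hom_inv_id := rfl
                  inv_hom_id := rfl })
      (by intros; ext φ; rfl)⟩
  · intro A B M
    exact ⟨NatIso.ofComponents
      (fun x => { hom := TypeCat.ofHom fun φ a b => φ (a, b)
                  inv := TypeCat.ofHom fun ψ p => ψ p.1 p.2
                  hom_inv_id := rfl
                  inv_hom_id := rfl })
      (by intros; ext φ; rfl)⟩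
end

section
/- For any category X and any presheaf A : Xᵒᵖ ⥤ Type, the endofunctor of the copresheaf category (X ⥤ Type) sending M to A ⧀ M has a left adjoint (denoted A ⊙ −). -/
open CategoryTheory Opposite

universe u

/-- For a fixed presheaf `A`, the endofunctor `M ↦ A ⧀ M` of the copresheaf category. -/
@[simps]
def complFunctor {X : Type u} [Category.{u} X] (A : Xᵒᵖ ⥤ Type u) :
    (X ⥤ Type u) ⥤ (X ⥤ Type u) where
  obj M := compl A M
  map {M N} η :=
    { app := fun x => TypeCat.ofHom fun φ => fun a => η.app x (φ a)
      naturality := by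
        intro x y f
        ext φ
        funext a
        exact types_congr_hom (η.naturality f) (φ (A.map f.op a)) }
  map_id := by intro M; ext x φ; rfl
  map_comp := by intros; ext x φ; rfl

/-- The category of elements of a presheaf `A`, as a covariant fibration over `X`. -/
structure Elts {X : Type u} [Category.{u} X] (A : Xᵒᵖ ⥤ Type u) : Type u where
  x : X
  a : A.obj (op x)

instance {X : Type u} [Category.{u} X] (A : Xᵒᵖ ⥤ Type u) : Category.{u} (Elts A) where
  Hom e f := { g : e.x ⟶ f.x // A.map g.op f.a = e.a }
  id e := ⟨𝟙 e.x, by simp⟩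
  comp {e f k} g h := ⟨g.1 ≫ h.1, by
    have : A.map (g.1 ≫ h.1).op k.a = A.map g.1.op (A.map h.1.op k.a) := by
      simp [op_comp, FunctorToTypes.map_comp_apply]
    rw [this, h.2, g.2]⟩

/-- Projection from the category of elements to `X`. -/
@[simps]
def eltsπ {X : Type u} [Category.{u} X] (A : Xᵒᵖ ⥤ Type u) : Elts A ⥤ X where
  obj e := e.x
  map g := g.1

/-- The key hom equivalence. -/
@[simps]
def complEquiv {X : Type u} [Category.{u} X] (A : Xᵒᵖ ⥤ Type u) (M N : X ⥤ Type u) :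
    (eltsπ A ⋙ M ⟶ eltsπ A ⋙ N) ≃ (M ⟶ _root_.compl A N) where
  toFun η :=
    { app := fun x => TypeCat.ofHom fun m a => η.app ⟨x, a⟩ m
      naturality := by
        intro x y f
        ext m
        funext a
        exact types_congr_hom (η.naturality (show (⟨x, A.map f.op a⟩ : Elts A) ⟶ ⟨y, a⟩ from
          ⟨f, rfl⟩)) m }
  invFun μ :=
    { app := fun e => TypeCat.ofHom fun m => μ.app e.1 m e.2
      naturality := by
        intro e e' g
        ext m
        have h : μ.app e'.x (M.map g.1 m) e'.a = N.map g.1 (μ.app e.x m (A.map g.1.op e'.a)) :=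
          congrFun (types_congr_hom (μ.naturality g.1) m) e'.a
        rw [g.2] at h
        exact h }
  left_inv η := by ext e m; rfl
  right_inv μ := by ext x m; rfl

/-- for any presheaf `A`, the endofunctor `M ↦ A ⧀ M` of copresheaves
has a left adjoint (denoted `A ⊙ −`). -/
theorem complFunctor_isRightAdjoint (X : Type u) [Category.{u} X] (A : Xᵒᵖ ⥤ Type u) :
    (complFunctor A).IsRightAdjoint := by
  let π := eltsπ A
  let W : (X ⥤ Type u) ⥤ (Elts A ⥤ Type u) := (Functor.whiskeringLeft (Elts A) X (Type u)).obj π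
  let a : π.lan ⊣ W := π.lanAdjunction (Type u)
  refine ⟨W ⋙ π.lan, ⟨Adjunction.mkOfHomEquiv ?_⟩⟩
  exact
    { homEquiv := fun M N => (a.homEquiv (W.obj M) N).trans (complEquiv A M N)
      homEquiv_naturality_left_symm := by
        intro M M' N f g
        change (a.homEquiv (W.obj M) N).symm ((complEquiv A M N).symm (f ≫ g)) =
          π.lan.map (W.map f) ≫ (a.homEquiv (W.obj M') N).symm ((complEquiv A M' N).symm g)
        rw [← a.homEquiv_naturality_left_symm]
        congr 1
      homEquiv_naturality_right := by
        intro M N N' f g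
        change (complEquiv A M N') (a.homEquiv (W.obj M) N' (f ≫ g)) =
          (complEquiv A M N) (a.homEquiv (W.obj M) N f) ≫ (complFunctor A).map g
        rw [a.homEquiv_naturality_right]
        rfl }
end

section
/- If X is a groupoid, then exponentials of presheaves on X are computed pointwise: for presheaves A, B : Xᵒᵖ ⥤ Type, the presheaf P defined by P(x) = (A(x) → B(x)), with P(λ : x → y) sending φ : A(y) → B(y) to B(λ) ∘ φ ∘ A(λ⁻¹) : A(x) → B(x), is an exponential of B by A in the presheaf category: there are bijections Hom(C × A, B) ≅ Hom(C, P), natural in the presheaf C. -/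
open CategoryTheory Opposite

universe u

/-- The product of two morphisms of presheaves, for the pointwise product. -/
@[simps]
def prodMap {X : Type u} [Category.{u} X] {A A' B B' : Xᵒᵖ ⥤ Type u}
    (f : A ⟶ A') (g : B ⟶ B') : prodP A B ⟶ prodP A' B' where
  app x := TypeCat.ofHom fun p => (f.app x p.1, g.app x p.2)
  naturality := by
    intro x y h
    ext p
    refine Prod.ext ?_ ?_
    · exact NatTrans.naturality_apply f h p.1
    · exact NatTrans.naturality_apply g h p.2

/-- For a groupoid `X`, the pointwise candidate exponential of presheaves:
`P(x) = (A(x) → B(x))`, with `P(λ)` sending `φ` to `B(λ) ∘ φ ∘ A(λ⁻¹)`. -/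
@[simps]
def pexp {X : Type u} [Groupoid.{u} X] (A B : Xᵒᵖ ⥤ Type u) : Xᵒᵖ ⥤ Type u where
  obj x := A.obj x → B.obj x
  map {c d} f := TypeCat.ofHom fun φ => fun a => B.map f (φ (A.map (Groupoid.inv f.unop).op a))
  map_id := by
    intro c
    ext φ a
    simp
  map_comp := by
    intro c d e f g
    ext φ a
    simp

/-- if `X` is a groupoid, exponentials of presheaves on `X` are computed
pointwise: `pexp A B` is an exponential of `B` by `A`, i.e. there are bijections
`Hom(C × A, B) ≅ Hom(C, pexp A B)`, natural in `C`. -/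
theorem groupoid_pointwise_exponential (X : Type u) [Groupoid.{u} X]
    (A B : Xᵒᵖ ⥤ Type u) :
    ∃ e : ∀ C : Xᵒᵖ ⥤ Type u, (prodP C A ⟶ B) ≃ (C ⟶ pexp A B),
      ∀ (C C' : Xᵒᵖ ⥤ Type u) (g : C' ⟶ C) (h : prodP C A ⟶ B),
        e C' (prodMap g (𝟙 A) ≫ h) = g ≫ e C h := by
  refine ⟨fun C => ⟨fun h =>
    { app := fun x => TypeCat.ofHom fun c a => h.app x (c, a)
      naturality := by
        intro x y f
        ext c
        funext a
        change h.app y (C.map f c, a) = B.map f (h.app x (c, A.map (Groupoid.inv f.unop).op a))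
        have := NatTrans.naturality_apply h f (show (prodP C A).obj x from (c, A.map (Groupoid.inv f.unop).op a))
        change h.app y (C.map f c, A.map f (A.map (Groupoid.inv f.unop).op a)) = B.map f (h.app x (c, A.map (Groupoid.inv f.unop).op a)) at this
        have ha : A.map f (A.map (Groupoid.inv f.unop).op a) = a := by
          rw [← FunctorToTypes.map_comp_apply]; simp
        rw [← this, ha] },
    fun k =>
    { app := fun x => TypeCat.ofHom fun p => k.app x p.1 p.2
      naturality := by
        intro x y f
        ext p
        have := NatTrans.naturality_apply k f p.1
        change k.app y (C.map f p.1) = fun a => B.map f (k.app x p.1 (A.map (Groupoid.inv f.unop).op a)) at this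
        change k.app y (C.map f p.1) (A.map f p.2) = B.map f (k.app x p.1 p.2)
        have ha : A.map (Groupoid.inv f.unop).op (A.map f p.2) = p.2 := by
          rw [← FunctorToTypes.map_comp_apply]; simp
        simp only [prodP_map, types_comp_apply, this, pexp_map, TypeCat.ofHom_apply, ha] },
    fun h => rfl, fun k => rfl⟩,
    fun C C' g h => rfl⟩
end

section
/- For any category X, the functor from copresheaves to the over-category of X in Cat, sending M : X ⥤ Type to its category of elements E_M with its projection to X, is fully faithful and admits both a left adjoint and a right adjoint. -/
open CategoryTheory Opposite

universe u

/-- The functor from copresheaves on `X` to `Cat/X`, sending `M : X ⥤ Type` to its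
category of elements with its projection to `X` (a discrete opfibration). -/
@[simps]
def elemFunctor (X : Type u) [Category.{u} X] :
    (X ⥤ Type u) ⥤ Over (Cat.of X) where
  obj M := Over.mk (Y := Cat.of M.Elements)
    ((CategoryOfElements.π M).toCatHom : Cat.of M.Elements ⟶ Cat.of X)
  map {M N} α := Over.homMk
    ((CategoryOfElements.map α : M.Elements ⥤ N.Elements).toCatHom :
      Cat.of M.Elements ⟶ Cat.of N.Elements)
    (congrArg Functor.toCatHom (CategoryOfElements.map_π α))
  map_id := by intro M; rfl
  map_comp := by intros; rfl

namespace ElemAux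
variable {X : Type u} [Category.{u} X] {M : X ⥤ Type u}


lemma eqToHom_val {F : X ⥤ Type u} {u u' : F.Elements} (h : u = u') :
    (eqToHom h).val = eqToHom (congrArg Sigma.fst h) := by subst h; rfl

lemma elem_hom_eqToHom {F : X ⥤ Type u} {u u' : F.Elements} (h : u = u') (k : u ⟶ u')
    (hk : k.val = eqToHom (congrArg Sigma.fst h)) : k = eqToHom h := by
  subst h; apply CategoryOfElements.ext; simpa using hk

lemma map_comp_eqToHom_eq {C D : Type*} [Category C] [Category D] (G : C ⥤ D)
    {u v1 v2 : C} (a : u ⟶ v1) (b : u ⟶ v2) (r : v1 = v2) (hab : a ≫ eqToHom r = b)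
    {Z : D} (p : G.obj v1 = Z) (q : G.obj v2 = Z) :
    G.map a ≫ eqToHom p = G.map b ≫ eqToHom q := by
  subst r; subst hab; simp

lemma master1 {C D : Type*} [Category C] [Category D] (G : C ⥤ D)
    {u v v' w w' : C} {Z : D}
    (a : u ⟶ w') (b : u ⟶ v) (k : v' ⟶ w) (hv : v = v') (hw : w' = w)
    (hab : a ≫ eqToHom hw = b ≫ eqToHom hv ≫ k)
    (p : G.obj w' = Z) (h1 : G.obj v = G.obj v') (h2 : G.obj w = Z) :
    G.map a ≫ eqToHom p = G.map b ≫ eqToHom h1 ≫ G.map k ≫ eqToHom h2 := by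
  subst hv; subst hw
  obtain rfl : a = b ≫ k := by simpa using hab
  simp

lemma master2 {C D : Type*} [Category C] [Category D] (G : C ⥤ D)
    {u u' v v' : C} {Z : D} (a : u ⟶ v) (b : u' ⟶ v') (hu : u = u') (hv : v = v')
    (hab : a ≫ eqToHom hv = eqToHom hu ≫ b)
    (p : G.obj v = Z) (s : G.obj u = G.obj u') (q : G.obj v' = Z) :
    G.map a ≫ eqToHom p = eqToHom s ≫ G.map b ≫ eqToHom q := by
  subst hu; subst hv
  obtain rfl : a = b := by simpa using hab
  simp

lemma conj_eqToHom_eq {C D : Type*} [Category C] [Category D] (G : C ⥤ D)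
    {u1 u2 v1 v2 : C} (a : u1 ⟶ v1) (b : u2 ⟶ v2) (hu : u1 = u2) (hv : v1 = v2)
    (hab : a ≫ eqToHom hv = eqToHom hu ≫ b)
    {W Z : D} (p : G.obj v1 = Z) (q : G.obj v2 = Z) (s : W = G.obj u1) (t : W = G.obj u2) :
    eqToHom s ≫ G.map a ≫ eqToHom p = eqToHom t ≫ G.map b ≫ eqToHom q := by
  subst hu; subst hv; subst s
  obtain rfl : a = b := by simpa using hab
  simp

lemma congr_hom_swap {C D : Type*} [Category C] [Category D] {F P : C ⥤ D} (w : F = P)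
    {c c' : C} (f : c ⟶ c') :
    eqToHom (Functor.congr_obj w c) ≫ P.map f = F.map f ≫ eqToHom (Functor.congr_obj w c') := by
  subst w; simp

lemma conj_self {D : Type*} [Category D] {a b : D} (g : a ⟶ b) (p : a = a) (q : b = b) :
    g = eqToHom p ≫ g ≫ eqToHom q := by simp

lemma eqToHom_conj_assoc {D : Type*} [Category D] {a b c d e : D} (p : a = b) (g : b ⟶ c)
    (q : c = d) (r : d = e) (s : c = e) :
    eqToHom p ≫ (g ≫ eqToHom q) ≫ eqToHom r = eqToHom p ≫ g ≫ eqToHom s := by simp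

lemma val_conj {F : X ⥤ Type u} {a a' b b' : F.Elements} (h : a = a') (g : a' ⟶ b')
    (h' : b' = b) : (eqToHom h ≫ g ≫ eqToHom h').val
      = eqToHom (congrArg Sigma.fst h) ≫ g.val ≫ eqToHom (congrArg Sigma.fst h') := by
  subst h; subst h'; rfl

variable {C : Type*} [Category C]

@[simps]
def toG (P : C ⥤ X) (fam : ∀ c, M.obj (P.obj c))
    (nat : ∀ {c c'} (f : c ⟶ c'), M.map (P.map f) (fam c) = fam c') :
    C ⥤ M.Elements where
  obj c := ⟨P.obj c, fam c⟩
  map f := ⟨P.map f, nat f⟩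
  map_id c := by apply CategoryOfElements.ext; simp; rfl
  map_comp f g := by apply CategoryOfElements.ext; simp; rfl

lemma toG_π (P : C ⥤ X) (fam) (nat : ∀ {c c'} (f : c ⟶ c'), M.map (P.map f) (fam c) = fam c') :
    toG P fam nat ⋙ CategoryOfElements.π M = P := rfl

def toFam (P : C ⥤ X) (G : C ⥤ M.Elements) (w : G ⋙ CategoryOfElements.π M = P) (c : C) :
    M.obj (P.obj c) :=
  M.map (eqToHom (Functor.congr_obj w c)) (G.obj c).2

lemma toFam_nat (P : C ⥤ X) (G : C ⥤ M.Elements) (w : G ⋙ CategoryOfElements.π M = P)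
    {c c'} (f : c ⟶ c') : M.map (P.map f) (toFam P G w c) = toFam P G w c' := by
  have h := Functor.congr_hom w f
  have h2 := (G.map f).property
  simp only [Functor.comp_map, CategoryOfElements.π_map] at h
  have key : eqToHom (Functor.congr_obj w c) ≫ P.map f
      = (G.map f).val ≫ eqToHom (Functor.congr_obj w c') := congr_hom_swap w f
  calc M.map (P.map f) (toFam P G w c)
      = M.map (eqToHom (Functor.congr_obj w c) ≫ P.map f) (G.obj c).2 :=
        (FunctorToTypes.map_comp_apply _ _ _ _).symm
    _ = M.map ((G.map f).val ≫ eqToHom (Functor.congr_obj w c')) (G.obj c).2 := by rw [key]; rfl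
    _ = M.map (eqToHom (Functor.congr_obj w c')) (M.map (G.map f).val (G.obj c).2) :=
        FunctorToTypes.map_comp_apply _ _ _ _
    _ = toFam P G w c' := by rw [h2]; rfl



lemma toG_toFam (P : C ⥤ X) (G : C ⥤ M.Elements) (w : G ⋙ CategoryOfElements.π M = P) :
    toG P (toFam P G w) (toFam_nat P G w) = G := by
  fapply CategoryTheory.Functor.ext
  · intro c
    exact (Functor.Elements.ext (G.obj c) ⟨P.obj c, toFam P G w c⟩ (Functor.congr_obj w c) rfl).symm
  · intro c c' f
    apply CategoryOfElements.ext
    subst w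
    erw [val_conj]
    exact conj_self _ _ _

lemma toFam_toG (P : C ⥤ X) (fam) (nat : ∀ {c c'} (f : c ⟶ c'), M.map (P.map f) (fam c) = fam c')
    (w : toG P fam nat ⋙ CategoryOfElements.π M = P) :
    toFam P (toG P fam nat) w = fam := by
  funext c
  show M.map (eqToHom _) (fam c) = fam c
  erw [eqToHom_refl, M.map_id]; rfl


variable (X) (M) {N : X ⥤ Type u}

lemma elem_full : (elemFunctor X).Full where
  map_surjective {M N} f := by
    have w : (f.left.toFunctor : M.Elements ⥤ N.Elements) ⋙ CategoryOfElements.π N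
        = CategoryOfElements.π M := congrArg Cat.Hom.toFunctor (Over.w f)
    refine ⟨{ app := fun x => TypeCat.ofHom fun m => toFam (CategoryOfElements.π M) f.left.toFunctor w ⟨x, m⟩,
              naturality := fun x y l => by
                ext m
                exact (toFam_nat (CategoryOfElements.π M) f.left.toFunctor w
                  (⟨l, rfl⟩ : M.elementsMk x m ⟶ M.elementsMk y (M.map l m))).symm }, ?_⟩
    apply Over.OverMorphism.ext
    apply Cat.Hom.ext
    exact toG_toFam (CategoryOfElements.π M) f.left.toFunctor w

lemma elem_faithful : (elemFunctor X).Faithful where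
  map_injective {M N} α β h := by
    have h' : CategoryOfElements.map α = CategoryOfElements.map β :=
      congrArg (fun f => f.left.toFunctor) h
    ext x m
    have h3 := Functor.congr_obj h' (M.elementsMk x m)
    injection h3 with h4 h5
    try exact eq_of_heq h5

noncomputable section

lemma elem_isRightAdjoint : (elemFunctor X).IsRightAdjoint := by
  letI pt : ∀ A : Over (Cat.of X), ((A.left : Cat) ⥤ Type u) :=
    fun A => (Functor.const A.left).obj PUnit
  letI e2 : ∀ (A : Over (Cat.of X)) (M : X ⥤ Type u),
      (pt A ⟶ A.hom.toFunctor ⋙ M) ≃ (A ⟶ (elemFunctor X).obj M) :=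
    fun A M =>
    { toFun := fun τ => Over.homMk
        (toG (M := M) A.hom.toFunctor (fun a => τ.app a PUnit.unit)
          (fun {a a'} f => by
            have := ConcreteCategory.congr_hom (τ.naturality f) PUnit.unit
            exact this.symm)).toCatHom rfl
      invFun := fun φ =>
        { app := fun a => TypeCat.ofHom fun _ => toFam A.hom.toFunctor φ.left.toFunctor (congrArg Cat.Hom.toFunctor (Over.w φ)) a
          naturality := fun a a' f => by
            ext u
            exact (toFam_nat A.hom.toFunctor φ.left.toFunctor (congrArg Cat.Hom.toFunctor (Over.w φ)) f).symm }
      left_inv := fun τ => by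
        ext a u
        cases u
        have nat : ∀ {c c'} (f : c ⟶ c'),
            M.map (A.hom.toFunctor.map f) (τ.app c PUnit.unit) = τ.app c' PUnit.unit :=
          fun {c c'} f => by
            have := ConcreteCategory.congr_hom (τ.naturality f) PUnit.unit
            exact this.symm
        exact congrFun (toFam_toG A.hom.toFunctor
          (fun a => τ.app a PUnit.unit) nat rfl) a
      right_inv := fun φ => by
        apply Over.OverMorphism.ext
        apply Cat.Hom.ext
        exact toG_toFam A.hom.toFunctor φ.left.toFunctor (congrArg Cat.Hom.toFunctor (Over.w φ)) }
  letI e : ∀ (A : Over (Cat.of X)) (M : X ⥤ Type u),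
      ((A.hom.toFunctor.lan.obj (pt A)) ⟶ M) ≃ (A ⟶ (elemFunctor X).obj M) :=
    fun A M => ((A.hom.toFunctor.lanAdjunction (Type u)).homEquiv (pt A) M).trans (e2 A M)
  refine ⟨_, ⟨Adjunction.adjunctionOfEquivLeft e ?_⟩⟩
  intro A M M' g h
  show e2 A M' (_) = e2 A M (_) ≫ (elemFunctor X).map g
  erw [Adjunction.homEquiv_naturality_right]
  rfl

end

variable {X} {M}
section Robj

/-- The right adjoint on objects. -/
def Robj (A : Over (Cat.of X)) : X ⥤ Type u :=
  coyoneda.rightOp ⋙ (elemFunctor X).op ⋙ yoneda.obj A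

/-- The natural transformation `coyoneda.obj (op x) ⟶ M` attached to `m : M.obj x`. -/
@[simps]
def tau {x : X} (m : M.obj x) : coyoneda.obj (op x) ⟶ M where
  app y := TypeCat.ofHom fun f => M.map f m
  naturality y z g := by ext f; simp

lemma tau_comp {x y : X} (l : x ⟶ y) (m : M.obj x) :
    coyoneda.map l.op ≫ tau m = tau (M.map l m) := by
  ext z g
  show M.map (l ≫ g) m = M.map g (M.map l m)
  simp

variable {A : Over (Cat.of X)}

/-- Present an element of `(Robj A).obj x` as a morphism in `Over (Cat.of X)`. -/
def RobjHom (ψ : M ⟶ Robj A) (x : X) (m : M.obj x) :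
    (elemFunctor X).obj (coyoneda.obj (op x)) ⟶ A := ψ.app x m

lemma Robj_map_apply (ψ : M ⟶ Robj A) {x y : X} (g : x ⟶ y) (m : M.obj x) :
    RobjHom ψ y (M.map g m)
      = (elemFunctor X).map (coyoneda.map g.op) ≫ RobjHom ψ x m := by
  have := ConcreteCategory.congr_hom (ψ.naturality g) m
  exact this

lemma hnat2 (ψ : M ⟶ Robj A) {x y : X} (g : x ⟶ y) (m : M.obj x) :
    ((RobjHom ψ y (M.map g m)).left.toFunctor : (coyoneda.obj (op y)).Elements ⥤ A.left)
      = CategoryOfElements.map (coyoneda.map g.op) ⋙ (RobjHom ψ x m).left.toFunctor :=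
  congrArg (fun f => f.left.toFunctor) (Robj_map_apply ψ g m)

/-- Object part of the functor `M.Elements ⥤ A.left` induced by `ψ : M ⟶ Robj A`. -/
abbrev Hobj (ψ : M ⟶ Robj A) (e : M.Elements) : A.left :=
  (RobjHom ψ e.1 e.2).left.toFunctor.obj ⟨e.1, 𝟙 e.1⟩

lemma hnatf (ψ : M ⟶ Robj A) {e e' : M.Elements} (f : e ⟶ e') :
    ((RobjHom ψ e'.1 e'.2).left.toFunctor : (coyoneda.obj (op e'.1)).Elements ⥤ A.left)
      = CategoryOfElements.map (coyoneda.map f.val.op) ⋙ (RobjHom ψ e.1 e.2).left.toFunctor := by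
  have := hnat2 ψ f.val e.2
  rw [f.property] at this
  exact this

lemma objEq (ψ : M ⟶ Robj A) {e e' : M.Elements} (f : e ⟶ e') :
    (RobjHom ψ e.1 e.2).left.toFunctor.obj ⟨e'.1, 𝟙 e.1 ≫ f.val⟩ = Hobj ψ e' := by
  have h1 : (⟨e'.1, 𝟙 e.1 ≫ f.val⟩ : (coyoneda.obj (op e.1)).Elements)
      = ⟨e'.1, f.val ≫ 𝟙 e'.1⟩ :=
    Functor.Elements.ext (⟨e'.1, 𝟙 e.1 ≫ f.val⟩ : (coyoneda.obj (op e.1)).Elements)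
      ⟨e'.1, f.val ≫ 𝟙 e'.1⟩ rfl (by simp)
  refine (congrArg (RobjHom ψ e.1 e.2).left.toFunctor.obj h1).trans ?_
  exact (Functor.congr_obj (hnatf ψ f) (⟨e'.1, 𝟙 e'.1⟩ :
    (coyoneda.obj (op e'.1)).Elements)).symm

/-- The canonical morphism in the category of elements of `coyoneda`. -/
def kf {e e' : M.Elements} (f : e ⟶ e') :
    (coyoneda.obj (op e.1)).elementsMk e.1 (𝟙 e.1)
      ⟶ (coyoneda.obj (op e.1)).elementsMk e'.1 (𝟙 e.1 ≫ f.val) :=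
  ⟨f.val, rfl⟩

/-- The functor `M.Elements ⥤ A.left` induced by `ψ : M ⟶ Robj A`. -/
def H (ψ : M ⟶ Robj A) : M.Elements ⥤ A.left where
  obj := Hobj ψ
  map {e e'} f := (RobjHom ψ e.1 e.2).left.toFunctor.map (kf f) ≫ eqToHom (objEq ψ f)
  map_id e := by
    show (RobjHom ψ e.1 e.2).left.toFunctor.map (kf (𝟙 e)) ≫ eqToHom (objEq ψ (𝟙 e)) = 𝟙 (Hobj ψ e)
    have h : (coyoneda.obj (op e.1)).elementsMk e.1 (𝟙 e.1)
        = (coyoneda.obj (op e.1)).elementsMk e.1 (𝟙 e.1 ≫ (𝟙 e : e ⟶ e).val) :=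
      Functor.Elements.ext _ _ rfl (by simp)
    have hk : kf (𝟙 e) = eqToHom h := elem_hom_eqToHom h _ (by simp [kf])
    rw [hk]; erw [eqToHom_map, eqToHom_trans]
    simp only [eqToHom_refl]
  map_comp {e e' e''} f g := by
    show (RobjHom ψ e.1 e.2).left.toFunctor.map (kf (f ≫ g)) ≫ eqToHom (objEq ψ (f ≫ g))
      = ((RobjHom ψ e.1 e.2).left.toFunctor.map (kf f) ≫ eqToHom (objEq ψ f))
        ≫ ((RobjHom ψ e'.1 e'.2).left.toFunctor.map (kf g) ≫ eqToHom (objEq ψ g))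
    rw [Functor.congr_hom (hnatf ψ f) (kf g)]
    simp only [Functor.comp_map, Functor.comp_obj, Category.assoc, eqToHom_trans, eqToHom_trans_assoc]
    have hv : (coyoneda.obj (op e.1)).elementsMk e'.1 (𝟙 e.1 ≫ f.val)
        = (CategoryOfElements.map (coyoneda.map f.val.op)).obj
            ((coyoneda.obj (op e'.1)).elementsMk e'.1 (𝟙 e'.1)) :=
      Functor.Elements.ext _ _ rfl (by simp; erw [eqToHom_refl, Category.comp_id])
    have hw : (coyoneda.obj (op e.1)).elementsMk e''.1 (𝟙 e.1 ≫ (f ≫ g).val)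
        = (CategoryOfElements.map (coyoneda.map f.val.op)).obj
            ((coyoneda.obj (op e'.1)).elementsMk e''.1 (𝟙 e'.1 ≫ g.val)) :=
      Functor.Elements.ext _ _ rfl (by simp; erw [eqToHom_refl, Category.comp_id]; rfl)
    have hab : kf (f ≫ g) ≫ eqToHom hw
        = kf f ≫ eqToHom hv ≫ (CategoryOfElements.map (coyoneda.map f.val.op)).map (kf g) := by
      apply CategoryOfElements.ext
      simp [kf, eqToHom_val]
      erw [eqToHom_refl, eqToHom_refl, Category.comp_id, Category.id_comp]
    exact master1 ((RobjHom ψ e.1 e.2).left.toFunctor) (kf (f ≫ g)) (kf f)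
      ((CategoryOfElements.map (coyoneda.map f.val.op)).map (kf g)) hv hw hab _ _ _

lemma H_π (ψ : M ⟶ Robj A) : H ψ ⋙ A.hom.toFunctor = CategoryOfElements.π M := by
  fapply CategoryTheory.Functor.ext
  · intro e
    exact Functor.congr_obj (congrArg Cat.Hom.toFunctor (Over.w (RobjHom ψ e.1 e.2)))
      ((coyoneda.obj (op e.1)).elementsMk e.1 (𝟙 e.1))
  · intro e e' f
    have hw : ((RobjHom ψ e.1 e.2).left.toFunctor : (coyoneda.obj (op e.1)).Elements ⥤ A.left)
        ⋙ A.hom.toFunctor = CategoryOfElements.π (coyoneda.obj (op e.1)) :=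
      congrArg Cat.Hom.toFunctor (Over.w (RobjHom ψ e.1 e.2))
    have h := Functor.congr_hom hw (kf f)
    simp only [Functor.comp_map, CategoryOfElements.π_map] at h
    show A.hom.toFunctor.map
        ((RobjHom ψ e.1 e.2).left.toFunctor.map (kf f) ≫ eqToHom (objEq ψ f)) = _
    erw [Functor.map_comp, eqToHom_map, h]
    simp only [Category.assoc, eqToHom_trans]
    exact eqToHom_conj_assoc _ _ _ _ _

/-- `toFun` of the hom-equivalence for the right adjoint. -/
def Psi (φ : (elemFunctor X).obj M ⟶ A) : M ⟶ Robj A where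
  app x := TypeCat.ofHom fun m => (elemFunctor X).map (tau m) ≫ φ
  naturality x y g := by
    ext m
    show (elemFunctor X).map (tau (M.map g m)) ≫ φ
      = (elemFunctor X).map (coyoneda.map g.op) ≫ (elemFunctor X).map (tau m) ≫ φ
    rw [← Functor.map_comp_assoc, tau_comp]

/-- The hom-equivalence exhibiting the right adjoint of `elemFunctor`. -/
def eR (M : X ⥤ Type u) (A : Over (Cat.of X)) :
    ((elemFunctor X).obj M ⟶ A) ≃ (M ⟶ Robj A) where
  toFun := Psi
  invFun ψ := Over.homMk (H ψ).toCatHom (congrArg Functor.toCatHom (H_π ψ))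
  left_inv φ := by
    apply Over.OverMorphism.ext
    apply Cat.Hom.ext
    show H (Psi φ) = φ.left.toFunctor
    fapply CategoryTheory.Functor.ext
    · intro e
      exact congrArg φ.left.toFunctor.obj
        (Functor.Elements.ext (M.elementsMk e.1 (M.map (𝟙 e.1) e.2)) e rfl (by simp))
    · intro e e' f
      have hu : M.elementsMk e.1 (M.map (𝟙 e.1) e.2) = e :=
        Functor.Elements.ext _ _ rfl (by simp)
      have hv : M.elementsMk e'.1 (M.map (𝟙 e.1 ≫ f.val) e.2) = e' :=
        Functor.Elements.ext _ _ rfl (by simp [f.property])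
      have hab : (CategoryOfElements.map (tau e.2)).map (kf f) ≫ eqToHom hv
          = eqToHom hu ≫ f := by
        apply CategoryOfElements.ext
        simp [kf, eqToHom_val]
        erw [eqToHom_val, eqToHom_refl, Category.comp_id]
      exact master2 φ.left.toFunctor ((CategoryOfElements.map (tau e.2)).map (kf f)) f hu hv hab _ _ _
  right_inv ψ := by
    ext x m
    show (elemFunctor X).map (tau m) ≫ Over.homMk (H ψ).toCatHom _ = RobjHom ψ x m
    apply Over.OverMorphism.ext
    apply Cat.Hom.ext
    show CategoryOfElements.map (tau m) ⋙ H ψ = (RobjHom ψ x m).left.toFunctor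
    fapply CategoryTheory.Functor.ext
    · intro u
      refine (Functor.congr_obj (hnat2 ψ u.2 m)
        ((coyoneda.obj (op u.1)).elementsMk u.1 (𝟙 u.1))).trans ?_
      exact congrArg (RobjHom ψ x m).left.toFunctor.obj
        (Functor.Elements.ext ((coyoneda.obj (op x)).elementsMk u.1 (u.2 ≫ 𝟙 u.1)) u rfl
          (by simp))
    · intro u u' k
      show (RobjHom ψ u.1 (M.map u.2 m)).left.toFunctor.map
            (kf ((CategoryOfElements.map (tau m)).map k))
          ≫ eqToHom (objEq ψ ((CategoryOfElements.map (tau m)).map k)) = _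
      rw [Functor.congr_hom (hnat2 ψ u.2 m) (kf ((CategoryOfElements.map (tau m)).map k))]
      simp only [Functor.comp_map, Functor.comp_obj, Category.assoc, eqToHom_trans,
        eqToHom_trans_assoc]
      have hu : (CategoryOfElements.map (coyoneda.map u.2.op)).obj
            ((coyoneda.obj (op u.1)).elementsMk u.1 (𝟙 u.1)) = u :=
        Functor.Elements.ext _ _ rfl (by simp; erw [eqToHom_refl, Category.comp_id])
      have hv : (CategoryOfElements.map (coyoneda.map u.2.op)).obj
            ((coyoneda.obj (op u.1)).elementsMk u'.1
              (𝟙 u.1 ≫ ((CategoryOfElements.map (tau m)).map k).val)) = u' :=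
        Functor.Elements.ext _ _ rfl (by simp; erw [eqToHom_refl, Category.comp_id]; exact k.property)
      have hab : (CategoryOfElements.map (coyoneda.map u.2.op)).map
            (kf ((CategoryOfElements.map (tau m)).map k)) ≫ eqToHom hv
          = eqToHom hu ≫ k := by
        apply CategoryOfElements.ext
        simp [kf, eqToHom_val]
        erw [eqToHom_val, eqToHom_refl, eqToHom_refl, Category.comp_id]
        exact (Category.id_comp _).symm
      erw [eqToHom_trans]
      exact conj_eqToHom_eq (RobjHom ψ x m).left.toFunctor _ k hu hv hab _ _ _ _

lemma tau_push {M' : X ⥤ Type u} (f : M' ⟶ M) {x : X} (m : M'.obj x) :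
    tau m ≫ f = tau (f.app x m) := by
  ext y h
  exact ConcreteCategory.congr_hom (f.naturality h) m

lemma elem_isLeftAdjoint : (elemFunctor X).IsLeftAdjoint := by
  refine ⟨_, ⟨Adjunction.adjunctionOfEquivRight eR ?_⟩⟩
  intro M' M A f g
  ext x m
  show (elemFunctor X).map (tau m) ≫ (elemFunctor X).map f ≫ g
      = (elemFunctor X).map (tau (f.app x m)) ≫ g
  rw [← Functor.map_comp_assoc, tau_push]

end Robj

end ElemAux

/-- the functor `M ↦ (E_M → X)` from copresheaves to `Cat/X` is fully
faithful and admits both a left adjoint and a right adjoint. -/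
theorem elemFunctor_fullyFaithful_and_adjoints (X : Type u) [Category.{u} X] :
    (elemFunctor X).Full ∧ (elemFunctor X).Faithful ∧
      (elemFunctor X).IsRightAdjoint ∧ (elemFunctor X).IsLeftAdjoint := by
  exact ⟨ElemAux.elem_full X, ElemAux.elem_faithful X,
    ElemAux.elem_isRightAdjoint X, ElemAux.elem_isLeftAdjoint (X := X)⟩
end

section
/- A functor f : X ⥤ Y between small categories is fully faithful if and only if for every presheaf A : Xᵒᵖ ⥤ Type the unit A → (Lan_{fᵒᵖ} A) ∘ fᵒᵖ of the adjunction between left Kan extension along fᵒᵖ and restriction along fᵒᵖ is an isomorphism. -/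
open CategoryTheory Opposite

universe u

/-- `f : X ⥤ Y` is fully faithful iff for every presheaf `A` on `X`
the unit `A ⟶ (Lan_{fᵒᵖ} A) ∘ fᵒᵖ` of the adjunction `Lan_{fᵒᵖ} ⊣ (− ∘ fᵒᵖ)`
is an isomorphism. -/
theorem fullyFaithful_iff_lan_unit_iso (X Y : Type u) [Category.{u} X] [Category.{u} Y]
    (f : X ⥤ Y) :
    (f.Full ∧ f.Faithful) ↔
      ∀ A : Xᵒᵖ ⥤ Type u, IsIso ((f.op.lanAdjunction (Type u)).unit.app A) := by
  constructor
  · rintro ⟨hFull, hFaithful⟩ A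
    infer_instance
  · intro h
    -- For every `x`, the map `yonedaMap f x` is an isomorphism.
    have key : ∀ x : X, IsIso (yonedaMap f x) := by
      intro x
      have h1 : IsIso ((f.op.lanAdjunction (Type u)).unit.app (yoneda.obj x)) := h _
      rw [Functor.lanAdjunction_unit] at h1
      have fac := Functor.descOfIsLeftKanExtension_fac (f.op.lan.obj (yoneda.obj x))
        (f.op.lanUnit.app (yoneda.obj x)) (yoneda.obj (f.obj x)) (yonedaMap f x)
      have h2 : IsIso ((f.op.lan.obj (yoneda.obj x)).descOfIsLeftKanExtension
          (f.op.lanUnit.app (yoneda.obj x)) (yoneda.obj (f.obj x)) (yonedaMap f x)) :=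
        (Functor.isLeftKanExtension_iff_isIso _ _ _ fac).1 inferInstance
      rw [← fac]
      infer_instance
    have bij : ∀ (x x' : X), Function.Bijective (fun g : x' ⟶ x => f.map g) := by
      intro x x'
      have := key x
      have : IsIso ((yonedaMap f x).app (op x')) := inferInstance
      rw [isIso_iff_bijective] at this
      exact this
    constructor
    · exact ⟨fun {x' x} g => (bij x x').2 g⟩
    · exact ⟨fun {x' x} g g' hg => (bij x x').1 hg⟩
end

section
/- For a functor f : X ⥤ Y between small categories, the restriction functor on presheaves (Yᵒᵖ ⥤ Type) ⥤ (Xᵒᵖ ⥤ Type) given by precomposition with fᵒᵖ is fully faithful if and only if the restriction functor on copresheaves (Y ⥤ Type) ⥤ (X ⥤ Type) given by precomposition with f is fully faithful. (Each condition characterizes f being absolutely dense.) -/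
open CategoryTheory Opposite

universe u

namespace AbsDense

variable {A B : Type u} [Category.{u} A] [Category.{u} B]

/-- Index type for the coend `∫^a Hom(b, g a) × Hom(g a, c)`. -/
def Idx (g : A ⥤ B) (b c : B) : Type u :=
  Σ a : A, (b ⟶ g.obj a) × (g.obj a ⟶ c)

/-- The generating relation for the coend. -/
def rel (g : A ⥤ B) (b c : B) : Idx g b c → Idx g b c → Prop :=
  fun p p' => ∃ k : p.1 ⟶ p'.1, p'.2.1 = p.2.1 ≫ g.map k ∧ p.2.2 = g.map k ≫ p'.2.2

/-- The coend `∫^a Hom(b, g a) × Hom(g a, c)`. -/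
def Q (g : A ⥤ B) (b c : B) : Type u := Quot (rel g b c)

/-- The canonical composition map out of the coend. -/
def qc (g : A ⥤ B) (b c : B) : Q g b c → (b ⟶ c) :=
  Quot.lift (fun p => p.2.1 ≫ p.2.2) (by
    rintro ⟨a, u, w⟩ ⟨a', u', w'⟩ ⟨k, h1, h2⟩
    dsimp at h1 h2 ⊢
    rw [h1, h2]
    simp)

@[simp] lemma qc_mk (g : A ⥤ B) (b c : B) (p : Idx g b c) :
    qc g b c (Quot.mk _ p) = p.2.1 ≫ p.2.2 := rfl

/-- The elementary condition characterizing absolute density of `g`. -/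
def D (g : A ⥤ B) : Prop := ∀ b c : B, Function.Bijective (qc g b c)

/-- Functoriality of the coend in `c`. -/
def Qmap (g : A ⥤ B) (b : B) {c c' : B} (h : c ⟶ c') : Q g b c → Q g b c' :=
  Quot.map (fun p => ⟨p.1, p.2.1, p.2.2 ≫ h⟩) (by
    rintro ⟨a, u, w⟩ ⟨a', u', w'⟩ ⟨k, h1, h2⟩
    exact ⟨k, h1, by dsimp at h2 ⊢; rw [h2]; simp⟩)

@[simp] lemma Qmap_mk (g : A ⥤ B) (b : B) {c c' : B} (h : c ⟶ c') (p : Idx g b c) :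
    Qmap g b h (Quot.mk _ p) = Quot.mk _ (⟨p.1, p.2.1, p.2.2 ≫ h⟩ : Idx g b c') := rfl

lemma qc_Qmap (g : A ⥤ B) (b : B) {c c' : B} (h : c ⟶ c') (p : Q g b c) :
    qc g b c' (Qmap g b h p) = qc g b c p ≫ h := by
  induction p using Quot.ind with | _ p => ?_
  rcases p with ⟨a, u, w⟩
  exact (Category.assoc u w h).symm

/-- "Shift" of the coend in the variable `b`. -/
def Sh (g : A ⥤ B) {b b' : B} (h : b ⟶ b') (c : B) : Q g b' c → Q g b c :=
  Quot.map (fun p => ⟨p.1, h ≫ p.2.1, p.2.2⟩) (by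
    rintro ⟨a, u, w⟩ ⟨a', u', w'⟩ ⟨k, h1, h2⟩
    exact ⟨k, by dsimp at h1 ⊢; rw [h1]; simp, h2⟩)

@[simp] lemma Sh_mk (g : A ⥤ B) {b b' : B} (h : b ⟶ b') (c : B) (p : Idx g b' c) :
    Sh g h c (Quot.mk _ p) = Quot.mk _ (⟨p.1, h ≫ p.2.1, p.2.2⟩ : Idx g b c) := rfl

lemma qc_Sh (g : A ⥤ B) {b b' : B} (h : b ⟶ b') (c : B) (p : Q g b' c) :
    qc g b c (Sh g h c p) = h ≫ qc g b' c p := by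
  induction p using Quot.ind with | _ p => ?_
  rcases p with ⟨a, u, w⟩
  exact Category.assoc h u w

/-- The coend as a copresheaf on `B`. -/
def Qfunctor (g : A ⥤ B) (b : B) : B ⥤ Type u where
  obj c := Q g b c
  map h := TypeCat.ofHom (Qmap g b h)
  map_id c := by
    ext p
    induction p using Quot.ind with | _ p => ?_
    rcases p with ⟨a, u, w⟩
    exact congrArg (fun z => Quot.mk (rel g b c) ⟨a, u, z⟩) (Category.comp_id w)
  map_comp h h' := by
    ext p
    induction p using Quot.ind with | _ p => ?_
    rcases p with ⟨a, u, w⟩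
    exact congrArg (fun z => Quot.mk (rel g b _) ⟨a, u, z⟩) (Category.assoc w h h').symm

/-- The composition map as a natural transformation `Q ⟶ Hom(b, -)`. -/
def qNat (g : A ⥤ B) (b : B) : Qfunctor g b ⟶ coyoneda.obj (op b) where
  app c := TypeCat.ofHom (qc g b c)
  naturality c c' h := by
    ext p
    induction p using Quot.ind with | _ p => ?_
    rcases p with ⟨a, u, w⟩
    exact (Category.assoc u w h).symm

theorem D_of_ff (g : A ⥤ B)
    (hF : ((Functor.whiskeringLeft A B (Type u)).obj g).Full)
    (hf : ((Functor.whiskeringLeft A B (Type u)).obj g).Faithful) : D g := by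
  intro b c
  -- the canonical section of the restricted composition map
  let s : ((Functor.whiskeringLeft A B (Type u)).obj g).obj (coyoneda.obj (op b)) ⟶
      ((Functor.whiskeringLeft A B (Type u)).obj g).obj (Qfunctor g b) :=
    { app := fun a => TypeCat.ofHom (fun u => Quot.mk _ ⟨a, u, 𝟙 (g.obj a)⟩)
      naturality := by
        intro a a' k
        ext u
        exact (Quot.sound ⟨k, rfl, by simp⟩).symm }
  obtain ⟨t, ht⟩ := hF.map_surjective s
  have happ : ∀ (a : A) (u : b ⟶ g.obj a),
      t.app (g.obj a) u = Quot.mk _ (⟨a, u, 𝟙 (g.obj a)⟩ : Idx g b (g.obj a)) := by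
    intro a u
    exact types_congr_hom (congrArg (fun τ => τ.app a) ht) u
  have htq : t ≫ qNat g b = 𝟙 (coyoneda.obj (op b)) := by
    apply hf.map_injective
    ext a u
    show qc g b (g.obj a) (t.app (g.obj a) u) = u
    rw [happ a u]
    exact Category.comp_id u
  have key : ∀ p : Q g b c, t.app c (qc g b c p) = p := by
    intro p
    induction p using Quot.ind with | _ p => ?_
    rcases p with ⟨a, u, w⟩
    have hnat : t.app c (u ≫ w) = Qmap g b w (t.app (g.obj a) u) :=
      ConcreteCategory.congr_hom (t.naturality w) u
    show t.app c (u ≫ w) = Quot.mk _ (⟨a, u, w⟩ : Idx g b c)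
    rw [hnat, happ a u]
    exact congrArg (fun z => Quot.mk (rel g b c) ⟨a, u, z⟩) (Category.id_comp w)
  constructor
  · intro p p' hpp
    rw [← key p, ← key p', hpp]
  · intro h
    refine ⟨t.app c h, ?_⟩
    exact types_congr_hom (congrArg (fun τ => τ.app c) htq) h

/-- Auxiliary map: the value function associated to a natural transformation
between restricted copresheaves. -/
def vFun (g : A ⥤ B) {F G : B ⥤ Type u} (γ : g ⋙ F ⟶ g ⋙ G) (b : B) (x : F.obj b) (c : B) :
    Q g b c → G.obj c :=
  Quot.lift (fun p => G.map p.2.2 (γ.app p.1 (F.map p.2.1 x))) (by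
    rintro ⟨a, u, w⟩ ⟨a', u', w'⟩ ⟨k, h1, h2⟩
    dsimp at h1 h2 ⊢
    rw [h1, h2, Functor.map_comp_apply, Functor.map_comp_apply]
    exact congrArg (G.map w') (NatTrans.naturality_apply γ k (F.map u x)).symm)

@[simp] lemma vFun_mk (g : A ⥤ B) {F G : B ⥤ Type u} (γ : g ⋙ F ⟶ g ⋙ G) (b : B)
    (x : F.obj b) (c : B) (p : Idx g b c) :
    vFun g γ b x c (Quot.mk _ p) = G.map p.2.2 (γ.app p.1 (F.map p.2.1 x)) := rfl

lemma vFun_nat (g : A ⥤ B) {F G : B ⥤ Type u} (γ : g ⋙ F ⟶ g ⋙ G) (b : B)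
    (x : F.obj b) {c c' : B} (h : c ⟶ c') (p : Q g b c) :
    vFun g γ b x c' (Qmap g b h p) = G.map h (vFun g γ b x c p) := by
  induction p using Quot.ind with | _ p => ?_
  rcases p with ⟨a, u, w⟩
  exact G.map_comp_apply w h (γ.app a (F.map u x))

lemma vFun_shift (g : A ⥤ B) {F G : B ⥤ Type u} (γ : g ⋙ F ⟶ g ⋙ G) {b b' : B}
    (h : b ⟶ b') (x : F.obj b) (c : B) (p : Q g b' c) :
    vFun g γ b' (F.map h x) c p = vFun g γ b x c (Sh g h c p) := by
  induction p using Quot.ind with | _ p => ?_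
  rcases p with ⟨a, u, w⟩
  exact congrArg (fun z => G.map w (γ.app a z)) (F.map_comp_apply h u x).symm

theorem ff_of_D (g : A ⥤ B) (hD : D g) :
    ((Functor.whiskeringLeft A B (Type u)).obj g).Full ∧
      ((Functor.whiskeringLeft A B (Type u)).obj g).Faithful := by
  have hinj : ∀ b c : B, Function.Injective (qc g b c) := fun b c => (hD b c).1
  have hsurj : ∀ b c : B, Function.Surjective (qc g b c) := fun b c => (hD b c).2
  have hq : ∀ (b c : B) (m : b ⟶ c),
      qc g b c ((Equiv.ofBijective (qc g b c) (hD b c)).symm m) = m := fun b c m =>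
    (Equiv.ofBijective (qc g b c) (hD b c)).apply_symm_apply m
  set qinv : ∀ b c : B, (b ⟶ c) → Q g b c :=
    fun b c => (Equiv.ofBijective (qc g b c) (hD b c)).symm with hqinv
  constructor
  · -- Full
    refine ⟨?_⟩
    intro F G γ
    refine ⟨{ app := fun b => TypeCat.ofHom (fun x => vFun g γ b x b (qinv b b (𝟙 b))), naturality := ?_ }, ?_⟩
    · intro b b' h
      ext x
      show vFun g γ b' (F.map h x) b' (qinv b' b' (𝟙 b')) =
        G.map h (vFun g γ b x b (qinv b b (𝟙 b)))
      rw [vFun_shift, ← vFun_nat]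
      refine congrArg (vFun g γ b x b') (hinj b b' ?_)
      rw [qc_Sh, hq, qc_Qmap, hq]
      simp
    · ext a x
      show vFun g γ (g.obj a) x (g.obj a) (qinv (g.obj a) (g.obj a) (𝟙 (g.obj a))) = γ.app a x
      have : qinv (g.obj a) (g.obj a) (𝟙 (g.obj a)) =
          Quot.mk _ (⟨a, 𝟙 (g.obj a), 𝟙 (g.obj a)⟩ : Idx g (g.obj a) (g.obj a)) := by
        refine hinj _ _ ?_
        rw [hq]
        exact (Category.comp_id (𝟙 (g.obj a))).symm
      rw [this]
      show G.map (𝟙 (g.obj a)) (γ.app a (F.map (𝟙 (g.obj a)) x)) = γ.app a x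
      rw [Functor.map_id_apply, Functor.map_id_apply]
  · -- Faithful
    refine ⟨?_⟩
    intro F G α β hab
    ext c x
    obtain ⟨p, hp⟩ := hsurj c c (𝟙 c)
    induction p using Quot.ind with | _ p => ?_
    rcases p with ⟨a, u, w⟩
    have hp' : u ≫ w = 𝟙 c := hp
    have hcomp : F.map w (F.map u x) = x := by
      rw [← Functor.map_comp_apply, hp', Functor.map_id_apply]
    have hga : α.app (g.obj a) = β.app (g.obj a) :=
      congrArg (fun τ => τ.app a) hab
    calc α.app c x = α.app c (F.map w (F.map u x)) := by rw [hcomp]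
      _ = G.map w (α.app (g.obj a) (F.map u x)) := NatTrans.naturality_apply α w _
      _ = G.map w (β.app (g.obj a) (F.map u x)) := by rw [hga]
      _ = β.app c (F.map w (F.map u x)) := (NatTrans.naturality_apply β w _).symm
      _ = β.app c x := by rw [hcomp]

/-- Transfer of the coend across `op`. -/
def phi (g : A ⥤ B) (b c : Bᵒᵖ) : Q g.op b c → Q g c.unop b.unop :=
  Quot.lift (fun p => Quot.mk _ (⟨p.1.unop, p.2.2.unop, p.2.1.unop⟩ : Idx g c.unop b.unop)) (by
    rintro ⟨a, u, w⟩ ⟨a', u', w'⟩ ⟨k, h1, h2⟩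
    dsimp at h1 h2 ⊢
    refine (Quot.sound ⟨k.unop, ?_, ?_⟩).symm
    · dsimp
      rw [h2]
      rfl
    · dsimp
      rw [h1]
      rfl)

/-- Inverse transfer of the coend across `op`. -/
def psi (g : A ⥤ B) (b c : Bᵒᵖ) : Q g c.unop b.unop → Q g.op b c :=
  Quot.lift (fun p => Quot.mk _ (⟨Opposite.op p.1, p.2.2.op, p.2.1.op⟩ : Idx g.op b c)) (by
    rintro ⟨a, u, w⟩ ⟨a', u', w'⟩ ⟨k, h1, h2⟩
    dsimp at h1 h2 ⊢
    refine (Quot.sound ⟨k.op, ?_, ?_⟩).symm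
    · dsimp
      rw [h2]
      rfl
    · dsimp
      rw [h1]
      rfl)

lemma phi_psi (g : A ⥤ B) (b c : Bᵒᵖ) (p : Q g c.unop b.unop) :
    phi g b c (psi g b c p) = p := by
  induction p using Quot.ind with | _ p => ?_
  rcases p with ⟨a, u, w⟩
  rfl

lemma psi_phi (g : A ⥤ B) (b c : Bᵒᵖ) (p : Q g.op b c) :
    psi g b c (phi g b c p) = p := by
  induction p using Quot.ind with | _ p => ?_
  rcases p with ⟨a, u, w⟩
  rfl

lemma qc_phi (g : A ⥤ B) (b c : Bᵒᵖ) (p : Q g.op b c) :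
    qc g c.unop b.unop (phi g b c p) = (qc g.op b c p).unop := by
  induction p using Quot.ind with | _ p => ?_
  rcases p with ⟨a, u, w⟩
  rfl

lemma transfer (g : A ⥤ B) (b c : Bᵒᵖ) :
    Function.Bijective (qc g.op b c) ↔ Function.Bijective (qc g c.unop b.unop) := by
  have hphi : Function.Bijective (phi g b c) :=
    Function.bijective_iff_has_inverse.2 ⟨psi g b c, psi_phi g b c, phi_psi g b c⟩
  have hpsi : Function.Bijective (psi g b c) :=
    Function.bijective_iff_has_inverse.2 ⟨phi g b c, phi_psi g b c, psi_phi g b c⟩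
  have hunop : Function.Bijective (fun h : b ⟶ c => h.unop) :=
    Function.bijective_iff_has_inverse.2
      ⟨fun h => h.op, fun h => rfl, fun h => rfl⟩
  have hop : Function.Bijective (fun h : c.unop ⟶ b.unop => h.op) :=
    Function.bijective_iff_has_inverse.2
      ⟨fun h => h.unop, fun h => rfl, fun h => rfl⟩
  constructor
  · intro hb
    have heq : qc g c.unop b.unop = fun p => (qc g.op b c (psi g b c p)).unop := by
      funext p
      rw [← qc_phi g b c (psi g b c p), phi_psi]
    rw [heq]
    exact hunop.comp (hb.comp hpsi)
  · intro hb
    have heq : qc g.op b c = fun p => (qc g c.unop b.unop (phi g b c p)).op := by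
      funext p
      rw [qc_phi g b c p]
      rfl
    rw [heq]
    exact hop.comp (hb.comp hphi)

theorem D_op_iff (g : A ⥤ B) : D g.op ↔ D g := by
  constructor
  · intro hD b c
    exact (transfer g (Opposite.op c) (Opposite.op b)).1 (hD (Opposite.op c) (Opposite.op b))
  · intro hD b c
    exact (transfer g b c).2 (hD c.unop b.unop)

end AbsDense

/-- for `f : X ⥤ Y`, restriction of presheaves along `fᵒᵖ` is fully
faithful iff restriction of copresheaves along `f` is fully faithful (each condition
characterizes `f` being absolutely dense). -/
theorem presheaf_restriction_ff_iff_copresheaf_restriction_ff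
    (X Y : Type u) [Category.{u} X] [Category.{u} Y] (f : X ⥤ Y) :
    (((Functor.whiskeringLeft Xᵒᵖ Yᵒᵖ (Type u)).obj f.op).Full ∧
      ((Functor.whiskeringLeft Xᵒᵖ Yᵒᵖ (Type u)).obj f.op).Faithful) ↔
    (((Functor.whiskeringLeft X Y (Type u)).obj f).Full ∧
      ((Functor.whiskeringLeft X Y (Type u)).obj f).Faithful) := by
  constructor
  · rintro ⟨h1, h2⟩
    exact AbsDense.ff_of_D f ((AbsDense.D_op_iff f).mp (AbsDense.D_of_ff f.op h1 h2))
  · rintro ⟨h1, h2⟩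
    exact AbsDense.ff_of_D f.op ((AbsDense.D_op_iff f).mpr (AbsDense.D_of_ff f h1 h2))
end

section
/- For a functor f : X ⥤ Y between small categories, the restriction functor on presheaves (Yᵒᵖ ⥤ Type) ⥤ (Xᵒᵖ ⥤ Type) given by precomposition with fᵒᵖ is fully faithful if and only if the canonical map Lan_{fᵒᵖ × f} hom_X → hom_Y is an isomorphism, where this map corresponds under the adjunction Lan_{fᵒᵖ × f} ⊣ (precomposition with fᵒᵖ × f) to the natural transformation hom_X → hom_Y ∘ (fᵒᵖ × f) given by the action of f on morphisms. -/
open CategoryTheory Opposite Limits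

universe u

/-- The canonical natural transformation `hom_X ⟶ (fᵒᵖ × f) ⋙ hom_Y` given by the
action of `f` on morphisms. -/
@[simps]
def homMap {X Y : Type u} [Category.{u} X] [Category.{u} Y] (f : X ⥤ Y) :
    Functor.hom X ⟶ (f.op.prod f) ⋙ Functor.hom Y where
  app p := ↾fun φ => f.map φ
  naturality := by
    intro p q g
    ext φ
    change f.map (g.1.unop ≫ φ ≫ g.2) = f.map g.1.unop ≫ f.map φ ≫ f.map g.2
    exact (f.map_comp _ _).trans (congrArg (f.map g.1.unop ≫ ·) (f.map_comp _ _))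

section GG
variable {C : Type u} [Category.{u} C]

@[simps]
def GG (P Q : Cᵒᵖ ⥤ Type u) : Cᵒᵖ × C ⥤ Type u where
  obj p := P.obj (op p.2) → Q.obj p.1
  map g := ↾fun φ z => Q.map g.1 (φ (P.map g.2.op z))
  map_id p := by ext φ z; simp
  map_comp g h := by ext φ z; simp

@[simps]
def toGG (P Q : Cᵒᵖ ⥤ Type u) (η : P ⟶ Q) : Functor.hom C ⟶ GG P Q where
  app p := ↾fun h z => η.app p.1 (P.map h.op z)
  naturality p q g := by
    ext h
    funext z
    change unop p.1 ⟶ p.2 at h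
    change η.app q.1 (P.map (g.1.unop ≫ h ≫ g.2).op z) = Q.map g.1 (η.app p.1 (P.map h.op (P.map g.2.op z)))
    simp [op_comp, NatTrans.naturality_apply]

@[simps]
def fromGG (P Q : Cᵒᵖ ⥤ Type u) (γ : Functor.hom C ⟶ GG P Q) : P ⟶ Q where
  app a := ↾(γ.app (a, unop a) (𝟙 (unop a)))
  naturality a b g := by
    ext z
    have h1 := congr_fun (types_congr_hom (γ.naturality ((𝟙 b, g.unop) : (b, unop b) ⟶ (b, unop a))) (𝟙 (unop b))) z
    have h2 := congr_fun (types_congr_hom (γ.naturality ((g, 𝟙 (unop a)) : (a, unop a) ⟶ (b, unop a))) (𝟙 (unop a))) z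
    change γ.app (b, unop a) ((𝟙 b).unop ≫ 𝟙 (unop b) ≫ g.unop) z = Q.map (𝟙 b) (γ.app (b, unop b) (𝟙 (unop b)) (P.map g.unop.op z)) at h1
    change γ.app (b, unop a) (g.unop ≫ 𝟙 (unop a) ≫ 𝟙 (unop a)) z = Q.map g (γ.app (a, unop a) (𝟙 (unop a)) (P.map (𝟙 (unop a)).op z)) at h2
    change γ.app (b, unop b) (𝟙 (unop b)) (P.map g z) = Q.map g (γ.app (a, unop a) (𝟙 (unop a)) z)
    simp only [FunctorToTypes.map_id_apply, Category.comp_id, Category.id_comp] at h1 h2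
    simp only [unop_id, Category.id_comp, Functor.map_id_apply, op_id] at h1 h2
    exact h1.symm.trans h2

lemma fromGG_toGG (P Q : Cᵒᵖ ⥤ Type u) (η : P ⟶ Q) : fromGG P Q (toGG P Q η) = η := by
  ext a z
  simp

lemma toGG_fromGG (P Q : Cᵒᵖ ⥤ Type u) (γ : Functor.hom C ⟶ GG P Q) :
    toGG P Q (fromGG P Q γ) = γ := by
  ext p h
  change unop p.1 ⟶ p.2 at h
  show (fun z => γ.app (p.1, unop p.1) (𝟙 (unop p.1)) (P.map h.op z)) = (γ.app p h : P.obj (op p.2) → Q.obj p.1)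
  funext z
  have h1 := congr_fun (types_congr_hom (γ.naturality ((𝟙 p.1, h) : (p.1, unop p.1) ⟶ p)) (𝟙 (unop p.1))) z
  change γ.app p ((𝟙 p.1).unop ≫ 𝟙 (unop p.1) ≫ h) z = Q.map (𝟙 p.1) (γ.app (p.1, unop p.1) (𝟙 (unop p.1)) (P.map h.op z)) at h1
  simpa using h1.symm

end GG

section Main
variable {X Y : Type u} [Category.{u} X] [Category.{u} Y] (f : X ⥤ Y)

lemma compatGG (P Q : Yᵒᵖ ⥤ Type u) (η : P ⟶ Q) :
    homMap f ≫ Functor.whiskerLeft (f.op.prod f) (toGG P Q η) =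
      (toGG (f.op ⋙ P) (f.op ⋙ Q) (Functor.whiskerLeft f.op η) :
        Functor.hom X ⟶ (f.op.prod f) ⋙ GG P Q) := rfl

lemma toGGX_inj (P Q : Yᵒᵖ ⥤ Type u) (δ₁ δ₂ : f.op ⋙ P ⟶ f.op ⋙ Q)
    (h : (toGG (f.op ⋙ P) (f.op ⋙ Q) δ₁ :
        Functor.hom X ⟶ (f.op.prod f) ⋙ GG P Q) = toGG (f.op ⋙ P) (f.op ⋙ Q) δ₂) :
    δ₁ = δ₂ := by
  have h' : toGG (f.op ⋙ P) (f.op ⋙ Q) δ₁ = toGG (f.op ⋙ P) (f.op ⋙ Q) δ₂ := h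
  rw [← fromGG_toGG _ _ δ₁, ← fromGG_toGG _ _ δ₂, h']

noncomputable def ffOfKan [hK : (Functor.hom Y).IsLeftKanExtension (homMap f)] :
    ((Functor.whiskeringLeft Xᵒᵖ Yᵒᵖ (Type u)).obj f.op).FullyFaithful where
  preimage {P Q} δ := fromGG P Q
    (((Functor.hom Y).homEquivOfIsLeftKanExtension (homMap f) (GG P Q)).symm
      (toGG (f.op ⋙ P) (f.op ⋙ Q) δ : Functor.hom X ⟶ (f.op.prod f) ⋙ GG P Q))
  map_preimage {P Q} δ := by
    set e := (Functor.hom Y).homEquivOfIsLeftKanExtension (homMap f) (GG P Q) with he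
    set γ := e.symm (toGG (f.op ⋙ P) (f.op ⋙ Q) δ :
      Functor.hom X ⟶ (f.op.prod f) ⋙ GG P Q) with hγ
    have key : (toGG (f.op ⋙ P) (f.op ⋙ Q) (Functor.whiskerLeft f.op (fromGG P Q γ)) :
        Functor.hom X ⟶ (f.op.prod f) ⋙ GG P Q) = toGG (f.op ⋙ P) (f.op ⋙ Q) δ := by
      rw [← compatGG]
      have : homMap f ≫ Functor.whiskerLeft (f.op.prod f) (toGG P Q (fromGG P Q γ)) = e (toGG P Q (fromGG P Q γ)) := rfl
      rw [this, toGG_fromGG, hγ]; exact e.apply_symm_apply _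
    exact toGGX_inj f P Q _ _ key
  preimage_map {P Q} η := by
    set e := (Functor.hom Y).homEquivOfIsLeftKanExtension (homMap f) (GG P Q) with he
    have key : (toGG (f.op ⋙ P) (f.op ⋙ Q) (Functor.whiskerLeft f.op η) :
        Functor.hom X ⟶ (f.op.prod f) ⋙ GG P Q) = e (toGG P Q η) := (compatGG f P Q η).symm
    show fromGG P Q (e.symm (toGG (f.op ⋙ P) (f.op ⋙ Q) (Functor.whiskerLeft f.op η) :
      Functor.hom X ⟶ (f.op.prod f) ⋙ GG P Q)) = η
    rw [key, Equiv.symm_apply_apply, fromGG_toGG]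

end Main

section PartA
variable {X Y : Type u} [Category.{u} X] [Category.{u} Y] (f : X ⥤ Y)
variable [((Functor.whiskeringLeft Xᵒᵖ Yᵒᵖ (Type u)).obj f.op).Full]
  [((Functor.whiskeringLeft Xᵒᵖ Yᵒᵖ (Type u)).obj f.op).Faithful]

noncomputable def colimAt (p : Yᵒᵖ × Y) :
    (Functor.LeftExtension.mk (Functor.hom Y) (homMap f)).IsPointwiseLeftKanExtensionAt p := by
  have hQk : (yoneda.obj p.2).IsLeftKanExtension (𝟙 (f.op ⋙ yoneda.obj p.2)) :=
    (f.op.isIso_lanAdjunction_counit_app_iff (yoneda.obj p.2)).mp inferInstance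
  have D_col : ∀ y, IsColimit ((Functor.LeftExtension.mk (yoneda.obj p.2) (𝟙 (f.op ⋙ yoneda.obj p.2))).coconeAt y) := Functor.isPointwiseLeftKanExtensionOfIsLeftKanExtension
    (L := f.op) (yoneda.obj p.2) (𝟙 (f.op ⋙ yoneda.obj p.2))
  set E := Functor.LeftExtension.mk (Functor.hom Y) (homMap f) with hE
  set K := CostructuredArrow.proj (f.op.prod f) p ⋙ Functor.hom X with hK
  set mkO : ∀ (j : CostructuredArrow f.op p.1), (f.obj (unop j.left) ⟶ p.2) →
      CostructuredArrow (f.op.prod f) p :=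
    fun j w => CostructuredArrow.mk (S := f.op.prod f) (Y := (j.left, unop j.left))
      ((j.hom, w) : (f.op.prod f).obj (j.left, unop j.left) ⟶ p) with hmkO
  set m : Cocone (CostructuredArrow.proj f.op p.1 ⋙ (f.op ⋙ yoneda.obj p.2)) :=
    { pt := colimit K
      ι :=
      { app := fun j => ↾fun w => colimit.ι K (mkO j w) (𝟙 (unop j.left))
        naturality := by
          intro j j' e
          ext w
          change f.obj (unop j.left) ⟶ p.2 at w
          set j₀ : CostructuredArrow (f.op.prod f) p :=
            CostructuredArrow.mk (S := f.op.prod f) (Y := (j'.left, unop j.left))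
              ((j'.hom, w) : (f.op.prod f).obj (j'.left, unop j.left) ⟶ p) with hj₀
          have h1 := types_congr_hom (colimit.w K
            ((CostructuredArrow.homMk
              ((e.left, 𝟙 (unop j.left)) : (j.left, unop j.left) ⟶ (j'.left, unop j.left))
              (by dsimp [mkO, j₀]; exact Prod.ext (CostructuredArrow.w e) (by simp)))
              : mkO j w ⟶ j₀)) (𝟙 (unop j.left))
          have h2 := types_congr_hom (colimit.w K
            ((CostructuredArrow.homMk
              ((𝟙 j'.left, e.left.unop) : (j'.left, unop j'.left) ⟶ (j'.left, unop j.left))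
              (by dsimp [mkO, j₀]; exact Prod.ext (by simp) (by simp)))
              : mkO j' (f.map e.left.unop ≫ w) ⟶ j₀)) (𝟙 (unop j'.left))
          change colimit.ι K j₀ (e.left.unop ≫ 𝟙 (unop j.left) ≫ 𝟙 (unop j.left)) = colimit.ι K (mkO j w) (𝟙 (unop j.left)) at h1
          change colimit.ι K j₀ ((𝟙 j'.left).unop ≫ 𝟙 (unop j'.left) ≫ e.left.unop) = colimit.ι K (mkO j' (f.map e.left.unop ≫ w)) (𝟙 (unop j'.left)) at h2
          change colimit.ι K (mkO j' (f.map e.left.unop ≫ w)) (𝟙 (unop j'.left)) = colimit.ι K (mkO j w) (𝟙 (unop j.left))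
          rw [← h1, ← h2]
          exact congrArg (fun x : unop j'.left ⟶ unop j.left => colimit.ι K j₀ x) (by
            show 𝟙 (unop j'.left) ≫ 𝟙 (unop j'.left) ≫ e.left.unop = e.left.unop ≫ 𝟙 (unop j.left) ≫ 𝟙 (unop j.left)
            simp) } } with hm
  have h₁ : (D_col p.1).desc m ≫ (colimit.isColimit K).desc (E.coconeAt p) = 𝟙 _ := by
    apply (D_col p.1).hom_ext
    intro j
    ext w
    change f.obj (unop j.left) ⟶ p.2 at w
    have hfac := types_congr_hom ((D_col p.1).fac m j) w
    have hd := types_congr_hom (colimit.ι_desc (E.coconeAt p) (mkO j w)) (𝟙 (unop j.left))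
    change (colimit.isColimit K).desc (E.coconeAt p) ((D_col p.1).desc m (j.hom.unop ≫ w)) = j.hom.unop ≫ w
    have hd2 : (E.coconeAt p).ι.app (mkO j w) (𝟙 (unop j.left)) = j.hom.unop ≫ w := by
      change j.hom.unop ≫ f.map (𝟙 (unop j.left)) ≫ w = j.hom.unop ≫ w
      simp
    exact (congrArg (fun x => (colimit.isColimit K).desc (E.coconeAt p) x) hfac).trans (hd.trans hd2)
  have h₂ : (colimit.isColimit K).desc (E.coconeAt p) ≫ (D_col p.1).desc m = 𝟙 _ := by
    apply (colimit.isColimit K).hom_ext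
    intro jj
    ext w
    change unop jj.left.1 ⟶ jj.left.2 at w
    have hι := types_congr_hom ((colimit.isColimit K).fac (E.coconeAt p) jj) w
    set jx : CostructuredArrow f.op p.1 := CostructuredArrow.mk (S := f.op) (Y := jj.left.1) jj.hom.1 with hjx
    have hfac := types_congr_hom ((D_col p.1).fac m jx) (f.map w ≫ jj.hom.2)
    have h3 := types_congr_hom (colimit.w K
      ((CostructuredArrow.homMk
        ((𝟙 jj.left.1, w) : (jj.left.1, unop jj.left.1) ⟶ jj.left)
        (by dsimp [mkO, jx]; exact Prod.ext (by simp) (by simp)))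
        : mkO jx (f.map w ≫ jj.hom.2) ⟶ jj)) (𝟙 (unop jj.left.1))
    change colimit.ι K jj ((𝟙 jj.left.1).unop ≫ 𝟙 (unop jj.left.1) ≫ w) = colimit.ι K (mkO jx (f.map w ≫ jj.hom.2)) (𝟙 (unop jj.left.1)) at h3
    have e3 : (𝟙 jj.left.1).unop ≫ 𝟙 (unop jj.left.1) ≫ w = w := by simp
    replace h3 := (congrArg (fun x : unop jj.left.1 ⟶ jj.left.2 => colimit.ι K jj x) e3).symm.trans h3
    change (D_col p.1).desc m ((colimit.isColimit K).desc (E.coconeAt p) (colimit.ι K jj w)) = colimit.ι K jj w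
    exact (congrArg (fun x => (D_col p.1).desc m x) hι).trans (hfac.trans h3.symm)
  haveI : IsIso ((colimit.isColimit K).desc (E.coconeAt p)) :=
    ⟨(D_col p.1).desc m, h₂, h₁⟩
  exact IsColimit.ofPointIso (colimit.isColimit K)

end PartA

/-- restriction of presheaves along `fᵒᵖ` is fully faithful iff the
canonical map `Lan_{fᵒᵖ × f} hom_X ⟶ hom_Y`, corresponding under the adjunction
`Lan_{fᵒᵖ × f} ⊣ (− ∘ (fᵒᵖ × f))` to `homMap f`, is an isomorphism. -/
theorem restriction_ff_iff_lan_hom_iso (X Y : Type u) [Category.{u} X] [Category.{u} Y]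
    (f : X ⥤ Y) :
    (((Functor.whiskeringLeft Xᵒᵖ Yᵒᵖ (Type u)).obj f.op).Full ∧
      ((Functor.whiskeringLeft Xᵒᵖ Yᵒᵖ (Type u)).obj f.op).Faithful) ↔
    IsIso ((((f.op.prod f).lanAdjunction (Type u)).homEquiv
      (Functor.hom X) (Functor.hom Y)).symm (homMap f)) := by
  have comm : (f.op.prod f).lanUnit.app (Functor.hom X) ≫
      Functor.whiskerLeft (f.op.prod f) ((((f.op.prod f).lanAdjunction (Type u)).homEquiv
        (Functor.hom X) (Functor.hom Y)).symm (homMap f)) = homMap f := by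
    have h := (((f.op.prod f).lanAdjunction (Type u)).homEquiv
      (Functor.hom X) (Functor.hom Y)).apply_symm_apply (homMap f)
    rw [Adjunction.homEquiv_unit, Functor.lanAdjunction_unit] at h
    exact h
  rw [← Functor.isLeftKanExtension_iff_isIso _ ((f.op.prod f).lanUnit.app (Functor.hom X))
    (homMap f) comm]
  constructor
  · rintro ⟨h1, h2⟩
    haveI := h1; haveI := h2
    exact Functor.LeftExtension.IsPointwiseLeftKanExtension.isLeftKanExtension
      (fun p => colimAt f p)
  · intro hK
    haveI := hK
    exact ⟨(ffOfKan f).full, (ffOfKan f).faithful⟩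
end

section
/- Let f : X ⥤ Y be a functor between small categories such that the restriction functor on presheaves (Yᵒᵖ ⥤ Type) ⥤ (Xᵒᵖ ⥤ Type) given by precomposition with fᵒᵖ is fully faithful. Then f is both a final functor and an initial functor. -/
open CategoryTheory Opposite CategoryTheory.Limits

universe u

/-- if restriction of presheaves along `fᵒᵖ` is fully faithful
(i.e. `f` is absolutely dense), then `f` is both final and initial. -/
theorem final_and_initial_of_absolutelyDense (X Y : Type u)
    [Category.{u} X] [Category.{u} Y] (f : X ⥤ Y)
    (hf : ((Functor.whiskeringLeft Xᵒᵖ Yᵒᵖ (Type u)).obj f.op).Full ∧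
      ((Functor.whiskeringLeft Xᵒᵖ Yᵒᵖ (Type u)).obj f.op).Faithful) :
    f.Final ∧ f.Initial := by
  obtain ⟨hFull, hFaithful⟩ := hf
  haveI := hFull
  haveI := hFaithful
  let L : Xᵒᵖ ⥤ Yᵒᵖ := f.op
  let adj := L.lanAdjunction (Type u)
  haveI : IsIso adj.counit := inferInstance
  -- Finality: for each `y`, the comma category `y / f` is connected.
  have hfinal : f.Final := by
    constructor
    intro y
    let T : Yᵒᵖ ⥤ Type u := (Functor.const _).obj PUnit
    have hiso : IsIso ((adj.counit.app T).app (op y)) := inferInstance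
    -- identify the value of the left Kan extension at `op y` with a colimit
    let e1 : (L.lan.obj (L ⋙ T)).obj (op y) ≅
        colimit (CostructuredArrow.proj L (op y) ⋙ (L ⋙ T)) :=
      L.leftKanExtensionObjIsoColimit (L ⋙ T) (op y)
    let e2 : Types.constPUnitFunctor.{u} (CostructuredArrow L (op y)) ≅
        CostructuredArrow.proj L (op y) ⋙ (L ⋙ T) :=
      NatIso.ofComponents (fun _ => Iso.refl _) (by intros; rfl)
    have hconn : IsConnected (CostructuredArrow L (op y)) := by
      rw [Types.isConnected_iff_colimit_constPUnitFunctor_iso_pUnit]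
      exact ⟨HasColimit.isoOfNatIso e2 ≪≫ e1.symm ≪≫
        asIso ((adj.counit.app T).app (op y))⟩
    have hconn' : IsConnected (StructuredArrow y f)ᵒᵖ :=
      isConnected_of_equivalent (structuredArrowOpEquivalence f y).symm
    exact isConnected_of_isConnected_op
  -- Initiality: show `f.op` is final using the colimit criterion.
  have hLfinal : L.Final := by
    apply Functor.final_of_colimit_comp_coyoneda_iso_pUnit
    intro d
    let G : Xᵒᵖ ⥤ Type u := L ⋙ coyoneda.obj (op d)
    exact ((L.lanCompColimIso.app G)).symm ≪≫
      colim.mapIso (asIso (adj.counit.app (coyoneda.obj (op d)))) ≪≫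
      Coyoneda.colimitCoyonedaIso (op d)
  haveI : f.op.Final := hLfinal
  exact ⟨hfinal, Functor.initial_of_final_op f⟩
end

section
/- For any small category X, the diagonal extension functor i_X : (Xᵒᵖ × X ⥤ Type) ⥤ Cat/X has a left adjoint ◇_X, whose value at an object p : P ⥤ X of Cat/X is the left Kan extension of hom_P along pᵒᵖ × p : Pᵒᵖ × P ⥤ Xᵒᵖ × X; that is, there are bijections Hom_{Xᵒᵖ × X ⥤ Type}(Lan_{pᵒᵖ × p} hom_P, H) ≅ Hom_{Cat/X}(p, i_X H), natural in H and in p. -/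
open CategoryTheory Opposite

universe u

section
variable {X : Type u} [Category.{u} X] (H : Xᵒᵖ × X ⥤ Type u)

lemma mapSnd_comp {x : Xᵒᵖ} {y y' y'' : X} (v : y ⟶ y') (w : y' ⟶ y'')
    (z : H.obj (x, y)) :
    H.map ((𝟙 x, v ≫ w) : (x, y) ⟶ (x, y'')) z =
      H.map ((𝟙 x, w) : (x, y') ⟶ (x, y'')) (H.map ((𝟙 x, v) : (x, y) ⟶ (x, y')) z) := by
  rw [← FunctorToTypes.map_comp_apply, prod_comp, Category.id_comp]

lemma mapFst_comp {x x' x'' : Xᵒᵖ} {y : X} (u : x ⟶ x') (u' : x' ⟶ x'')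
    (z : H.obj (x, y)) :
    H.map ((u ≫ u', 𝟙 y) : (x, y) ⟶ (x'', y)) z =
      H.map ((u', 𝟙 y) : (x', y) ⟶ (x'', y)) (H.map ((u, 𝟙 y) : (x, y) ⟶ (x', y)) z) := by
  rw [← FunctorToTypes.map_comp_apply, prod_comp, Category.id_comp]

lemma map_exch {x x' : Xᵒᵖ} {y y' : X} (u : x ⟶ x') (v : y ⟶ y') (z : H.obj (x, y)) :
    H.map ((𝟙 x', v) : (x', y) ⟶ (x', y')) (H.map ((u, 𝟙 y) : (x, y) ⟶ (x', y)) z) =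
      H.map ((u, 𝟙 y') : (x, y') ⟶ (x', y')) (H.map ((𝟙 x, v) : (x, y) ⟶ (x, y')) z) := by
  rw [← FunctorToTypes.map_comp_apply, ← FunctorToTypes.map_comp_apply]
  simp

end

/-- The total category of the diagonal extension `i_X H` of `H : Xᵒᵖ × X ⥤ Type`:
objects over `x` are elements of `H(x,x)`; there is (at most one) morphism over
`λ : x → y` from `a` to `b` exactly when `H(id_x, λ)(a) = H(λ, id_y)(b)`. -/
structure DiagEl {X : Type u} [Category.{u} X] (H : Xᵒᵖ × X ⥤ Type u) : Type u where
  pt : X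
  el : H.obj (op pt, pt)

instance {X : Type u} [Category.{u} X] (H : Xᵒᵖ × X ⥤ Type u) :
    Category.{u} (DiagEl H) where
  Hom s t := {l : s.pt ⟶ t.pt //
    H.map ((𝟙 (op s.pt), l) : (op s.pt, s.pt) ⟶ (op s.pt, t.pt)) s.el =
    H.map ((l.op, 𝟙 t.pt) : (op t.pt, t.pt) ⟶ (op s.pt, t.pt)) t.el}
  id s := ⟨𝟙 s.pt, by simp⟩
  comp {s t r} f g := ⟨f.1 ≫ g.1, by
    rw [mapSnd_comp, f.2, map_exch, g.2,
      show ((f.1 ≫ g.1).op : op r.pt ⟶ op s.pt) = g.1.op ≫ f.1.op from by simp,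
      mapFst_comp]⟩
  id_comp := by intros; apply Subtype.ext; simp
  comp_id := by intros; apply Subtype.ext; simp
  assoc := by intros; apply Subtype.ext; simp

/-- The projection of the diagonal extension to `X`. -/
@[simps]
def DiagEl.π {X : Type u} [Category.{u} X] (H : Xᵒᵖ × X ⥤ Type u) : DiagEl H ⥤ X where
  obj s := s.pt
  map f := f.1
  map_id := by intros; rfl
  map_comp := by intros; rfl

/-- The functor between diagonal extensions induced by a natural transformation. -/
@[simps]
def DiagEl.map {X : Type u} [Category.{u} X] {H K : Xᵒᵖ × X ⥤ Type u} (η : H ⟶ K) :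
    DiagEl H ⥤ DiagEl K where
  obj s := ⟨s.pt, η.app (op s.pt, s.pt) s.el⟩
  map {s t} f := ⟨f.1, by
    have h1 := FunctorToTypes.naturality η
      ((𝟙 (op s.pt), f.1) : (op s.pt, s.pt) ⟶ (op s.pt, t.pt)) s.el
    have h2 := FunctorToTypes.naturality η
      ((f.1.op, 𝟙 t.pt) : (op t.pt, t.pt) ⟶ (op s.pt, t.pt)) t.el
    rw [← h1, ← h2, f.2]⟩
  map_id := by intros; rfl
  map_comp := by intros; rfl

/-- The diagonal extension functor `i_X : (Xᵒᵖ × X ⥤ Type) ⥤ Cat/X`. -/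
@[simps]
def diagFunctor (X : Type u) [Category.{u} X] :
    (Xᵒᵖ × X ⥤ Type u) ⥤ Over (Cat.of X) where
  obj H := Over.mk (Y := Cat.of (DiagEl H)) ((DiagEl.π H).toCatHom : Cat.of (DiagEl H) ⟶ Cat.of X)
  map {H K} η := Over.homMk
    ((DiagEl.map η : DiagEl H ⥤ DiagEl K).toCatHom : Cat.of (DiagEl H) ⟶ Cat.of (DiagEl K))
    rfl
  map_id := by intros; rfl
  map_comp := by intros; rfl

section AuxLemmas

variable {X : Type u} [Category.{u} X] {H : Xᵒᵖ × X ⥤ Type u}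

lemma DiagEl.hom_prop {s t : DiagEl H} (m : s ⟶ t) :
    H.map ((𝟙 (op s.pt), m.1) : (op s.pt, s.pt) ⟶ (op s.pt, t.pt)) s.el =
    H.map ((m.1.op, 𝟙 t.pt) : (op t.pt, t.pt) ⟶ (op s.pt, t.pt)) t.el := m.2

lemma DiagEl.theta_comp {s t r w : DiagEl H} (k : s ⟶ t) (m : t ⟶ r) (n : r ⟶ w) :
    H.map ((𝟙 (op s.pt), (k ≫ m ≫ n).1) : (op s.pt, s.pt) ⟶ (op s.pt, w.pt)) s.el =
    H.map ((k.1.op, n.1) : (op t.pt, r.pt) ⟶ (op s.pt, w.pt))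
      (H.map ((𝟙 (op t.pt), m.1) : (op t.pt, t.pt) ⟶ (op t.pt, r.pt)) t.el) := by
  have hval : (k ≫ m ≫ n).1 = k.1 ≫ m.1 ≫ n.1 := rfl
  rw [hval, mapSnd_comp, k.2, mapSnd_comp, map_exch, ← FunctorToTypes.map_comp_apply]
  simp

lemma prod_eqToHom_fst {C : Type*} {D : Type*} [Category C] [Category D]
    {x y : C × D} (h : x = y) : (eqToHom h).1 = eqToHom (congrArg Prod.fst h) := by
  subst h; rfl

lemma prod_eqToHom_snd {C : Type*} {D : Type*} [Category C] [Category D]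
    {x y : C × D} (h : x = y) : (eqToHom h).2 = eqToHom (congrArg Prod.snd h) := by
  subst h; rfl

lemma DiagEl.eqToHom_val {s t : DiagEl H} (h : s = t) :
    (eqToHom h).1 = eqToHom (congrArg DiagEl.pt h) := by subst h; rfl

lemma DiagEl.mk_eq {x y : X} (h : y = x) (e : H.obj (op y, y))
    (hpair : ((op y, y) : Xᵒᵖ × X) = (op x, x)) :
    (⟨x, H.map (eqToHom hpair) e⟩ : DiagEl H) = ⟨y, e⟩ := by
  subst h
  have h0 : eqToHom hpair = 𝟙 ((op y, y) : Xᵒᵖ × X) := by simp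
  rw [h0, FunctorToTypes.map_id_apply]

variable {P : Type u} [Category.{u} P] (H) (q : P ⥤ X)

/-- The functor `P ⥤ DiagEl H` induced by a natural transformation
`hom_P ⟶ (qᵒᵖ × q) ⋙ H`. -/
def toDiag (α : Functor.hom P ⟶ (q.op.prod q) ⋙ H) : P ⥤ DiagEl H where
  obj a := ⟨q.obj a, α.app (op a, a) (𝟙 a)⟩
  map {a b} f := ⟨q.map f, by
    have h1 := FunctorToTypes.naturality α
      ((𝟙 (op a), f) : (op a, a) ⟶ (op a, b)) (𝟙 a)
    have h2 := FunctorToTypes.naturality α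
      ((f.op, 𝟙 b) : (op b, b) ⟶ (op a, b)) (𝟙 b)
    simp only [Functor.hom_obj, Functor.hom_map, unop_id, Category.id_comp,
      Category.comp_id, Functor.comp_map, Functor.prod_map, Functor.op_map,
      Functor.op_obj, Functor.comp_obj, Functor.prod_obj, unop_op,
      Quiver.Hom.unop_op, CategoryTheory.Functor.map_id, op_id] at h1 h2
    dsimp only
    rw [← h1, ← h2]
    show α.app (op a, b) (𝟙 a ≫ f : a ⟶ b) = α.app (op a, b) (f ≫ 𝟙 b : a ⟶ b)
    simp⟩
  map_id a := by apply Subtype.ext; exact q.map_id a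
  map_comp f g := by apply Subtype.ext; exact q.map_comp f g

variable (G : P ⥤ DiagEl H)

lemma toDiag_pt (w : G ⋙ DiagEl.π H = q) (a : P) : (G.obj a).pt = q.obj a :=
  Functor.congr_obj w a

lemma pair_eq (w : G ⋙ DiagEl.π H = q) (a b : P) :
    ((op (G.obj a).pt, (G.obj b).pt) : Xᵒᵖ × X) = (op (q.obj a), q.obj b) := by
  rw [toDiag_pt H q G w a, toDiag_pt H q G w b]

lemma G_val (w : G ⋙ DiagEl.π H = q) {a b : P} (m : a ⟶ b) :
    (G.map m).1 = eqToHom (toDiag_pt H q G w a) ≫ q.map m ≫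
      eqToHom (toDiag_pt H q G w b).symm := by
  have h := Functor.congr_hom w m
  simp at h
  exact h

/-- The natural transformation `hom_P ⟶ (qᵒᵖ × q) ⋙ H` induced by a functor
`G : P ⥤ DiagEl H` over `X`. -/
def natOfFunctor (w : G ⋙ DiagEl.π H = q) : Functor.hom P ⟶ (q.op.prod q) ⋙ H where
  app ab := TypeCat.ofHom fun f =>
    H.map (eqToHom (pair_eq H q G w ab.1.unop ab.2))
      (H.map ((𝟙 (op (G.obj ab.1.unop).pt), (G.map f).1) :
          (op (G.obj ab.1.unop).pt, (G.obj ab.1.unop).pt) ⟶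
            (op (G.obj ab.1.unop).pt, (G.obj ab.2).pt))
        (G.obj ab.1.unop).el)
  naturality := by
    rintro ⟨a, b⟩ ⟨a', b'⟩ ⟨u, v⟩
    ext (f : a.unop ⟶ b)
    show H.map (eqToHom (pair_eq H q G w a'.unop b'))
        (H.map ((𝟙 (op (G.obj a'.unop).pt), (G.map ((Functor.hom P).map (u, v) f)).1) :
            (op (G.obj a'.unop).pt, (G.obj a'.unop).pt) ⟶
              (op (G.obj a'.unop).pt, (G.obj b').pt)) (G.obj a'.unop).el) =
      ((q.op.prod q) ⋙ H).map ((u, v) : (a, b) ⟶ (a', b'))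
        (H.map (eqToHom (pair_eq H q G w a.unop b))
          (H.map ((𝟙 (op (G.obj a.unop).pt), (G.map f).1) :
              (op (G.obj a.unop).pt, (G.obj a.unop).pt) ⟶
                (op (G.obj a.unop).pt, (G.obj b).pt)) (G.obj a.unop).el))
    have hm : (Functor.hom P).map ((u, v) : (a, b) ⟶ (a', b')) f = u.unop ≫ f ≫ v := by
      simp [Functor.hom]
      rfl
    rw [hm, G.map_comp, G.map_comp, DiagEl.theta_comp]
    rw [← FunctorToTypes.map_comp_apply, ← FunctorToTypes.map_comp_apply,
      ← FunctorToTypes.map_comp_apply]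
    simp only [Functor.comp_map, Functor.prod_map]
    rw [← FunctorToTypes.map_comp_apply]
    refine congrFun (congrArg (fun m => (ConcreteCategory.hom (H.map m) : _ → _)) ?_) _
    apply CategoryTheory.Prod.hom_ext
    · simp only [prod_comp_fst, prod_eqToHom_fst, Category.id_comp]
      rw [G_val H q G w u.unop]
      simp [eqToHom_op]
    · simp only [prod_comp_snd, prod_eqToHom_snd]
      rw [G_val H q G w v]
      simp [G_val H q G w]

lemma toDiag_comp_pi (α : Functor.hom P ⟶ (q.op.prod q) ⋙ H) :
    toDiag H q α ⋙ DiagEl.π H = q := rfl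

lemma natOfFunctor_toDiag (α : Functor.hom P ⟶ (q.op.prod q) ⋙ H) :
    natOfFunctor H q (toDiag H q α) (toDiag_comp_pi H q α) = α := by
  apply NatTrans.ext
  funext ab
  obtain ⟨a, b⟩ := ab
  apply ConcreteCategory.hom_ext
  intro (f : a.unop ⟶ b)
  have h1 := FunctorToTypes.naturality α
    ((𝟙 a, f) : (a, a.unop) ⟶ (a, b)) (𝟙 a.unop)
  simp only [Functor.hom_obj, Functor.hom_map, unop_id, Category.id_comp,
    Category.comp_id, Functor.comp_map, Functor.prod_map, Functor.op_map,
    Functor.op_obj, Functor.comp_obj, Functor.prod_obj, unop_op,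
    Quiver.Hom.unop_op, CategoryTheory.Functor.map_id, op_id] at h1
  dsimp only [natOfFunctor, toDiag]
  show H.map (eqToHom _) (H.map ((𝟙 _, q.map f) : (op (q.obj a.unop), q.obj a.unop) ⟶
    (op (q.obj a.unop), q.obj b)) (α.app (op a.unop, a.unop) (𝟙 a.unop))) = α.app (a, b) f
  exact (FunctorToTypes.map_id_apply H _).trans
    (h1.symm.trans (congrArg (fun x => α.app (a, b) x) (Category.id_comp f)))

lemma toDiag_natOfFunctor (w : G ⋙ DiagEl.π H = q) :
    toDiag H q (natOfFunctor H q G w) = G := by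
  have hobj : ∀ a : P, (toDiag H q (natOfFunctor H q G w)).obj a = G.obj a := by
    intro a
    dsimp only [toDiag, natOfFunctor]
    erw [TypeCat.ofHom_apply]
    rw [show (G.map (𝟙 a)).1 = 𝟙 (G.obj a).pt from congrArg Subtype.val (G.map_id a)]
    have hid : H.map ((𝟙 (op (G.obj a).pt), 𝟙 (G.obj a).pt) :
        (op (G.obj a).pt, (G.obj a).pt) ⟶ (op (G.obj a).pt, (G.obj a).pt))
        (G.obj a).el = (G.obj a).el := FunctorToTypes.map_id_apply H _
    rw [hid]
    exact DiagEl.mk_eq (toDiag_pt H q G w a) (G.obj a).el _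
  refine CategoryTheory.Functor.ext hobj (fun a b f => ?_)
  apply Subtype.ext
  show q.map f = (eqToHom (hobj a) ≫ G.map f ≫ eqToHom (hobj b).symm).1
  rw [show (eqToHom (hobj a) ≫ G.map f ≫ eqToHom (hobj b).symm).1 =
    (eqToHom (hobj a)).1 ≫ (G.map f).1 ≫ (eqToHom (hobj b).symm).1 from rfl,
    DiagEl.eqToHom_val, DiagEl.eqToHom_val, G_val H q G w f]
  simp only [Category.assoc, eqToHom_trans, eqToHom_trans_assoc]
  erw [eqToHom_refl, eqToHom_refl, Category.id_comp, Category.comp_id]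

end AuxLemmas

section EquivSection

variable {X : Type u} [Category.{u} X]

/-- The natural bijection `(hom_P ⟶ (pᵒᵖ × p) ⋙ H) ≃ (p ⟶ i_X H)`. -/
def overEquiv (p : Over (Cat.of X)) (H : Xᵒᵖ × X ⥤ Type u) :
    (Functor.hom ↑p.left ⟶
        (Functor.prod (Functor.op (p.hom.toFunctor : ↑p.left ⥤ X)) (p.hom.toFunctor : ↑p.left ⥤ X)) ⋙ H) ≃
      (p ⟶ (diagFunctor X).obj H) where
  toFun α := Over.homMk
    ((toDiag H (p.hom.toFunctor : ↑p.left ⥤ X) α : ↑p.left ⥤ DiagEl H).toCatHom :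
      p.left ⟶ Cat.of (DiagEl H)) rfl
  invFun φ := natOfFunctor H (p.hom.toFunctor : ↑p.left ⥤ X)
    (φ.left.toFunctor : ↑p.left ⥤ DiagEl H) (congrArg Cat.Hom.toFunctor (Over.w φ))
  left_inv α := natOfFunctor_toDiag H _ α
  right_inv φ := by
    apply Over.OverMorphism.ext
    apply Cat.Hom.ext
    show (toDiag H (p.hom.toFunctor : ↑p.left ⥤ X) _ : ↑p.left ⥤ DiagEl H) = φ.left.toFunctor
    exact toDiag_natOfFunctor H _ _ (congrArg Cat.Hom.toFunctor (Over.w φ))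

lemma overEquiv_natural (p : Over (Cat.of X)) {H H' : Xᵒᵖ × X ⥤ Type u} (g : H ⟶ H')
    (α : Functor.hom ↑p.left ⟶
      (Functor.prod (Functor.op (p.hom.toFunctor : ↑p.left ⥤ X)) (p.hom.toFunctor : ↑p.left ⥤ X)) ⋙ H) :
    overEquiv p H' (α ≫ Functor.whiskerLeft _ g) = overEquiv p H α ≫ (diagFunctor X).map g := by
  apply Over.OverMorphism.ext
  rfl

end EquivSection

/-- the diagonal extension functor `i_X` has a left adjoint `◇_X`
whose value at `p : P ⥤ X` is the left Kan extension of `hom_P` along `pᵒᵖ × p`;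
the adjunction provides bijections
`Hom(Lan_{pᵒᵖ × p} hom_P, H) ≅ Hom_{Cat/X}(p, i_X H)` natural in `H` and `p`. -/
theorem diagFunctor_has_left_adjoint_lan_hom (X : Type u) [Category.{u} X] :
    ∃ (L : Over (Cat.of X) ⥤ (Xᵒᵖ × X ⥤ Type u)) (_ : L ⊣ diagFunctor X),
      ∀ (p : Over (Cat.of X)),
        Nonempty (L.obj p ≅
          ((Functor.prod (Functor.op (p.hom.toFunctor : ↑p.left ⥤ X)) (p.hom.toFunctor : ↑p.left ⥤ X)).lan.obj
            (Functor.hom ↑p.left))) := by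
  refine ⟨Adjunction.leftAdjointOfEquiv
      (G := diagFunctor X)
      (F_obj := fun p => (Functor.prod (Functor.op (p.hom.toFunctor : ↑p.left ⥤ X))
        (p.hom.toFunctor : ↑p.left ⥤ X)).lan.obj (Functor.hom ↑p.left))
      (e := fun p H => (((Functor.prod (Functor.op (p.hom.toFunctor : ↑p.left ⥤ X))
        (p.hom.toFunctor : ↑p.left ⥤ X)).lanAdjunction (Type u)).homEquiv
          (Functor.hom ↑p.left) H).trans (overEquiv p H))
      ?he, Adjunction.adjunctionOfEquivLeft _ _, fun p => ⟨Iso.refl _⟩⟩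
  intro p H H' g h
  exact (congrArg (overEquiv p H') (((Functor.prod (Functor.op (p.hom.toFunctor : ↑p.left ⥤ X))
        (p.hom.toFunctor : ↑p.left ⥤ X)).lanAdjunction (Type u)).homEquiv_naturality_right h g)).trans
    (overEquiv_natural p g _)
end
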